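/- arXiv:2002.05261 — 7 statements merged into one kernel-verified Lean document; each statement's English description precedes it below -/
import Mathlib

section
/- There exists a function Ψ_∞ : Ã → ℂ such that for every arc a ∈ Ã the sequence Ψ_n(a) converges to Ψ_∞(a) as n → ∞, and Ψ_∞ is a fixed point of the evolution: (UΨ_∞)(a) = Ψ_∞(a) for every arc a. -/
open scoped BigOperators

/-- A symmetric directed graph: arcs with origin/terminus maps and an
inversion involution; every vertex has a finite nonempty set of outgoing
arcs; the graph is connected. -/
structure SymDigraph where
  V : Type
  A : Type
  o : A → V
  t : A → V
  bar : A → A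
  bar_inv : Function.Involutive bar
  o_bar : ∀ a, o (bar a) = t a
  t_bar : ∀ a, t (bar a) = o a
  out_fin : ∀ u : V, {a : A | o a = u}.Finite
  out_ne : ∀ u : V, {a : A | o a = u}.Nonempty
  connected : ∀ u v : V, Relation.ReflTransGen (fun x y => ∃ a, o a = x ∧ t a = y) u v

/-- `p` is a transition function of a random walk: `0 < p a ≤ 1` and the
outgoing probabilities at every vertex sum to `1`. -/
def IsTransition (G : SymDigraph) (p : G.A → ℝ) : Prop :=
  (∀ a, 0 < p a ∧ p a ≤ 1) ∧
  ∀ u : G.V, ∑ᶠ a ∈ {a : G.A | G.o a = u}, p a = 1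

/-- The Szegedy evolution:
`(UΨ)(a) = 2√(p a) Σ_{b : t b = o a} √(p b̄) Ψ(b) − Ψ(ā)`. -/
noncomputable def szegedy (G : SymDigraph) (p : G.A → ℝ) (Ψ : G.A → ℂ) : G.A → ℂ :=
  fun a =>
    2 * (Real.sqrt (p a) : ℂ) *
        (∑ᶠ b ∈ {b : G.A | G.t b = G.o a}, (Real.sqrt (p (G.bar b)) : ℂ) * Ψ b)
      - Ψ (G.bar a)

/-- `ρ_V(u) = Σ_{b : t b = u} √(p b̄) Ψ(b)`. -/
noncomputable def rhoV (G : SymDigraph) (p : G.A → ℝ) (Ψ : G.A → ℂ) (u : G.V) : ℂ :=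
  ∑ᶠ b ∈ {b : G.A | G.t b = u}, (Real.sqrt (p (G.bar b)) : ℂ) * Ψ b

/-- `ρ_E(|a|) = (Ψ(a) + Ψ(ā))/2`. -/
noncomputable def rhoE (G : SymDigraph) (Ψ : G.A → ℂ) (a : G.A) : ℂ :=
  (Ψ a + Ψ (G.bar a)) / 2

/-- Reversibility of `p` with reversible measure `m_V`; the detailed balance
condition `p(a) m_V(o a) = p(ā) m_V(t a)`. -/
def IsReversible (G : SymDigraph) (p : G.A → ℝ) (mV : G.V → ℝ) : Prop :=
  (∀ u, 0 < mV u) ∧ ∀ a, p a * mV (G.o a) = p (G.bar a) * mV (G.t a)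

/-- The edge measure `m_E(|a|) = p(a) m_V(o a)`. -/
def mEdge (G : SymDigraph) (p : G.A → ℝ) (mV : G.V → ℝ) (a : G.A) : ℝ :=
  p a * mV (G.o a)

/-- The tailed graph `G̃`: a finite internal graph `G0 = (V0, A0)` together
with `r ≥ 1` semi-infinite tails.  Tail `j` has vertices `tailV j 0,
tailV j 1, …` (with root `tailV j 0 = o(P_j) ∈ V0`, all other tail vertices
outside `V0`) and inward arcs `tailA j k` going from `tailV j (k+1)` to
`tailV j k`; `e_j = tailA j 0`.  Outward arcs are the `bar (tailA j k)`. -/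
structure TailedGraph extends SymDigraph where
  r : ℕ
  r_pos : 0 < r
  V0 : Set V
  A0 : Set A
  V0_fin : V0.Finite
  A0_fin : A0.Finite
  A0_bar : ∀ a ∈ A0, bar a ∈ A0
  A0_ends : ∀ a ∈ A0, o a ∈ V0 ∧ t a ∈ V0
  tailV : Fin r → ℕ → V
  tailA : Fin r → ℕ → A
  tailA_o : ∀ j k, o (tailA j k) = tailV j (k + 1)
  tailA_t : ∀ j k, t (tailA j k) = tailV j k
  tailV_root : ∀ j, tailV j 0 ∈ V0
  tailV_notin : ∀ j k, tailV j (k + 1) ∉ V0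
  tailV_inj : ∀ j k j' k', tailV j (k + 1) = tailV j' (k' + 1) → j = j' ∧ k = k'
  tailA_nin : ∀ j k, tailA j k ∉ A0
  arcs_cover : ∀ a : A, a ∈ A0 ∨ ∃ j k, a = tailA j k ∨ a = bar (tailA j k)
  verts_cover : ∀ u : V, u ∈ V0 ∨ ∃ j k, u = tailV j (k + 1)

/-- A transition function on the tailed graph: additionally `p = 1/2` on all
tail arcs except possibly the arcs leaving `o(P_j)` into tail `j`
(that is, except the `bar (tailA j 0)`). -/
def TailTransition (G : TailedGraph) (p : G.A → ℝ) : Prop :=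
  IsTransition G.toSymDigraph p ∧
  (∀ j k, p (G.tailA j k) = 1 / 2) ∧
  ∀ j k, p (G.bar (G.tailA j (k + 1))) = 1 / 2

/-- `Ψ` is a stationary state with boundary data `α β : ℂ^r`:
`UΨ = Ψ`, `Ψ = α_j` on the inward arcs of tail `j` and `Ψ = β_j` on the
outward arcs of tail `j`. -/
def IsStationaryState (G : TailedGraph) (p : G.A → ℝ) (Ψ : G.A → ℂ)
    (α β : Fin G.r → ℂ) : Prop :=
  szegedy G.toSymDigraph p Ψ = Ψ ∧
  (∀ j k, Ψ (G.tailA j k) = α j) ∧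
  ∀ j k, Ψ (G.bar (G.tailA j k)) = β j

/-- `m(δG0) = Σ_{j=1}^r m_E(|e_j|)`. -/
def mDelta (G : TailedGraph) (p : G.A → ℝ) (mV : G.V → ℝ) : ℝ :=
  ∑ j : Fin G.r, mEdge G.toSymDigraph p mV (G.tailA j 0)

/-- `⟨m_{δE}, α⟩ = Σ_{j=1}^r √(m_E(|e_j|)/m(δG0)) · α_j`. -/
noncomputable def bdryInner (G : TailedGraph) (p : G.A → ℝ) (mV : G.V → ℝ)
    (α : Fin G.r → ℂ) : ℂ :=
  ∑ j : Fin G.r,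
    (Real.sqrt (mEdge G.toSymDigraph p mV (G.tailA j 0) / mDelta G p mV) : ℂ) * α j

/-- The current
`j(a) = √(m_E(|a|)) Ψ(a) − (m_E(|a|)/√(m(δG0))) ⟨m_{δE}, α⟩`. -/
noncomputable def current (G : TailedGraph) (p : G.A → ℝ) (mV : G.V → ℝ)
    (α : Fin G.r → ℂ) (Ψ : G.A → ℂ) (a : G.A) : ℂ :=
  (Real.sqrt (mEdge G.toSymDigraph p mV a) : ℂ) * Ψ a
    - ((mEdge G.toSymDigraph p mV a : ℝ) : ℂ)
        / (Real.sqrt (mDelta G p mV) : ℂ) * bdryInner G p mV α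

/-- A cycle `(a_1, …, a_s)`: consecutive arcs concatenate (cyclically) and
the `2s` arcs `a_1, …, a_s, ā_1, …, ā_s` are pairwise distinct. -/
def IsCycle (G : SymDigraph) (s : ℕ) (c : Fin s → G.A) : Prop :=
  0 < s ∧
  (∀ k : Fin s, G.t (c k) = G.o (c ⟨(k.val + 1) % s, Nat.mod_lt _ k.pos⟩)) ∧
  Function.Injective (Sum.elim c fun k => G.bar (c k))

open Classical in
/-- The cycle vector `w_c`: `1/√(m_E(|a_k|))` at `a_k`, `−1/√(m_E(|a_k|))`
at `ā_k`, and `0` elsewhere. -/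
noncomputable def cycleVec (G : SymDigraph) (mE : G.A → ℝ) {s : ℕ}
    (c : Fin s → G.A) (a : G.A) : ℂ :=
  if ∃ k, a = c k then ((1 / Real.sqrt (mE a) : ℝ) : ℂ)
  else if ∃ k, a = G.bar (c k) then ((-(1 / Real.sqrt (mE a)) : ℝ) : ℂ)
  else 0


-- ====== auxiliary graph lemmas ======
namespace QWAux

open Finset Filter Complex

attribute [local instance] Classical.propDecidable

variable (G : TailedGraph) (p : G.A → ℝ)

lemma in_fin (u : G.V) : {b : G.A | G.t b = u}.Finite := by
  apply Set.Finite.subset ((G.out_fin u).image G.bar)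
  intro b hb
  exact ⟨G.bar b, by simp only [Set.mem_setOf_eq, G.o_bar]; exact hb, G.bar_inv b⟩

noncomputable def outF (u : G.V) : Finset G.A := (G.out_fin u).toFinset
noncomputable def inF (u : G.V) : Finset G.A := (in_fin G u).toFinset

lemma mem_outF {a : G.A} {u : G.V} : a ∈ outF G u ↔ G.o a = u := by
  simp [outF, Set.Finite.mem_toFinset]

lemma mem_inF {b : G.A} {u : G.V} : b ∈ inF G u ↔ G.t b = u := by
  simp [inF, Set.Finite.mem_toFinset]

lemma szegedy_apply (Ψ : G.A → ℂ) (a : G.A) :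
    szegedy G.toSymDigraph p Ψ a =
      2 * (Real.sqrt (p a) : ℂ) *
        (∑ b ∈ inF G (G.o a), (Real.sqrt (p (G.bar b)) : ℂ) * Ψ b) - Ψ (G.bar a) := by
  rw [szegedy, finsum_mem_eq_finite_toFinset_sum _ (in_fin G (G.o a))]
  rfl

lemma sum_outF_p (hp : IsTransition G.toSymDigraph p) (u : G.V) :
    ∑ a ∈ outF G u, p a = 1 := by
  have := hp.2 u
  rwa [finsum_mem_eq_finite_toFinset_sum _ (G.out_fin u)] at this

lemma sum_outF_bar {M : Type*} [AddCommMonoid M] (u : G.V) (f : G.A → M) :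
    ∑ a ∈ outF G u, f (G.bar a) = ∑ b ∈ inF G u, f b := by
  refine Finset.sum_nbij' (fun a => G.bar a) (fun b => G.bar b) ?_ ?_ ?_ ?_ ?_
  · intro a ha; rw [mem_inF, G.t_bar]; exact mem_outF G |>.mp ha
  · intro b hb; rw [mem_outF, G.o_bar]; exact mem_inF G |>.mp hb
  · intro a _; exact G.bar_inv a
  · intro b _; exact G.bar_inv b
  · intro a _; rfl

end QWAux

-- continuing namespace QWAux
namespace QWAux
open Finset Filter Complex
variable (G : TailedGraph) (p : G.A → ℝ)

lemma sqrt_sq (hp : IsTransition G.toSymDigraph p) (a : G.A) :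
    (Real.sqrt (p a) : ℂ) * (Real.sqrt (p a) : ℂ) = (p a : ℂ) := by
  norm_cast
  exact Real.mul_self_sqrt (hp.1 a).1.le

/-- per-vertex weighted-sum identity: `σ_{UΨ}(u) = ρ_Ψ(u)`. -/
lemma rho_szegedy (hp : IsTransition G.toSymDigraph p) (Ψ : G.A → ℂ) (u : G.V) :
    ∑ a ∈ outF G u, (Real.sqrt (p a) : ℂ) * szegedy G.toSymDigraph p Ψ a
      = ∑ b ∈ inF G u, (Real.sqrt (p (G.bar b)) : ℂ) * Ψ b := by
  set R := ∑ b ∈ inF G u, (Real.sqrt (p (G.bar b)) : ℂ) * Ψ b with hR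
  have hterm : ∀ a ∈ outF G u, (Real.sqrt (p a) : ℂ) * szegedy G.toSymDigraph p Ψ a
      = 2 * (p a : ℂ) * R - (Real.sqrt (p a) : ℂ) * Ψ (G.bar a) := by
    intro a ha
    rw [szegedy_apply, mem_outF G |>.mp ha, ← hR, mul_sub, ← mul_assoc, ← mul_assoc,
      mul_comm ((Real.sqrt (p a) : ℂ)) 2, mul_assoc 2, sqrt_sq G p hp]
  rw [Finset.sum_congr rfl hterm, Finset.sum_sub_distrib]
  have h1 : ∑ a ∈ outF G u, 2 * (p a : ℂ) * R = 2 * R := by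
    rw [← Finset.sum_mul]
    have : ∑ a ∈ outF G u, 2 * (p a : ℂ) = 2 := by
      rw [← Finset.mul_sum]
      norm_cast
      rw [sum_outF_p G p hp u, mul_one]
    rw [this]
  have h2 : ∑ a ∈ outF G u, (Real.sqrt (p a) : ℂ) * Ψ (G.bar a) = R := by
    rw [hR, ← sum_outF_bar G u (fun b => (Real.sqrt (p (G.bar b)) : ℂ) * Ψ b)]
    exact Finset.sum_congr rfl fun a _ => by rw [G.bar_inv]
  rw [h1, h2]; ring

/-- per-vertex norm identity. -/
lemma normSq_szegedy (hp : IsTransition G.toSymDigraph p) (Ψ : G.A → ℂ) (u : G.V) :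
    ∑ a ∈ outF G u, Complex.normSq (szegedy G.toSymDigraph p Ψ a)
      = ∑ b ∈ inF G u, Complex.normSq (Ψ b) := by
  set R := ∑ b ∈ inF G u, (Real.sqrt (p (G.bar b)) : ℂ) * Ψ b with hR
  have hterm : ∀ a ∈ outF G u, Complex.normSq (szegedy G.toSymDigraph p Ψ a)
      = 4 * p a * Complex.normSq R + Complex.normSq (Ψ (G.bar a))
        - 2 * ((2 * (Real.sqrt (p a) : ℂ) * R) * (starRingEnd ℂ) (Ψ (G.bar a))).re := by
    intro a ha
    rw [szegedy_apply, mem_outF G |>.mp ha, ← hR, Complex.normSq_sub]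
    have : Complex.normSq (2 * (Real.sqrt (p a) : ℂ) * R)
        = 4 * p a * Complex.normSq R := by
      have h4 : Complex.normSq (2:ℂ) = 4 := by
        simp [Complex.normSq_apply]
        norm_num
      rw [Complex.normSq_mul, Complex.normSq_mul, Complex.normSq_ofReal,
        Real.mul_self_sqrt (hp.1 a).1.le, h4]
    rw [this]
  rw [Finset.sum_congr rfl hterm]
  have e1 : ∑ a ∈ outF G u, (4 * p a * Complex.normSq R + Complex.normSq (Ψ (G.bar a))
        - 2 * ((2 * (Real.sqrt (p a) : ℂ) * R) * (starRingEnd ℂ) (Ψ (G.bar a))).re)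
      = (∑ a ∈ outF G u, 4 * p a * Complex.normSq R)
        + (∑ a ∈ outF G u, Complex.normSq (Ψ (G.bar a)))
        - 2 * (∑ a ∈ outF G u, ((2 * (Real.sqrt (p a) : ℂ) * R) *
            (starRingEnd ℂ) (Ψ (G.bar a))).re) := by
    rw [Finset.sum_sub_distrib, Finset.sum_add_distrib, Finset.mul_sum]
  rw [e1]
  have h1 : ∑ a ∈ outF G u, 4 * p a * Complex.normSq R = 4 * Complex.normSq R := by
    rw [← Finset.sum_mul, ← Finset.mul_sum, sum_outF_p G p hp u]; ring
  have h2 : ∑ a ∈ outF G u, Complex.normSq (Ψ (G.bar a))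
      = ∑ b ∈ inF G u, Complex.normSq (Ψ b) :=
    sum_outF_bar G u (fun b => Complex.normSq (Ψ b))
  have h3 : ∑ a ∈ outF G u, ((2 * (Real.sqrt (p a) : ℂ) * R) *
      (starRingEnd ℂ) (Ψ (G.bar a))).re = 2 * Complex.normSq R := by
    have : ∑ a ∈ outF G u, ((2 * (Real.sqrt (p a) : ℂ) * R) *
        (starRingEnd ℂ) (Ψ (G.bar a))).re
        = (∑ a ∈ outF G u, (2 * (Real.sqrt (p a) : ℂ) * R) *
            (starRingEnd ℂ) (Ψ (G.bar a))).re := by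
      rw [Complex.re_sum]
    rw [this]
    have e2 : ∑ a ∈ outF G u, (2 * (Real.sqrt (p a) : ℂ) * R) * (starRingEnd ℂ) (Ψ (G.bar a))
        = 2 * R * (starRingEnd ℂ) (∑ a ∈ outF G u, (Real.sqrt (p a) : ℂ) * Ψ (G.bar a)) := by
      rw [map_sum, Finset.mul_sum]
      refine Finset.sum_congr rfl fun a _ => ?_
      rw [map_mul, Complex.conj_ofReal]
      ring
    have e3 : ∑ a ∈ outF G u, (Real.sqrt (p a) : ℂ) * Ψ (G.bar a) = R := by
      rw [hR, ← sum_outF_bar G u (fun b => (Real.sqrt (p (G.bar b)) : ℂ) * Ψ b)]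
      exact Finset.sum_congr rfl fun a _ => by rw [G.bar_inv]
    rw [e2, e3, mul_assoc, Complex.mul_conj]
    simp [Complex.normSq_eq_norm_sq]
    norm_cast
  rw [h1, h2, h3]; ring

end QWAux
namespace QWAux
open Finset Filter Complex
attribute [local instance] Classical.propDecidable
variable (G : TailedGraph) (p : G.A → ℝ)

lemma tailA_inj : Function.Injective (fun jk : Fin G.r × ℕ => G.tailA jk.1 jk.2) := by
  rintro ⟨j, k⟩ ⟨j', k'⟩ h
  have := congrArg G.o h
  rw [G.tailA_o, G.tailA_o] at this
  obtain ⟨h1, h2⟩ := G.tailV_inj _ _ _ _ this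
  exact Prod.ext h1 h2

lemma tail_ne_bar (j : Fin G.r) (k : ℕ) : G.tailA j k ≠ G.bar (G.tailA j (k + 1)) := by
  intro h
  have := congrArg G.t h
  rw [G.tailA_t, G.t_bar, G.tailA_o] at this
  cases k with
  | zero => exact G.tailV_notin j 1 (this ▸ G.tailV_root j)
  | succ m =>
      have := (G.tailV_inj _ _ _ _ this).2
      omega

lemma bar_tail_nin (j : Fin G.r) (k : ℕ) : G.bar (G.tailA j k) ∉ G.A0 := by
  intro h
  have := G.A0_bar _ h
  rw [G.bar_inv] at this
  exact G.tailA_nin j k this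

lemma outF_tail (j : Fin G.r) (k : ℕ) :
    outF G (G.tailV j (k + 1)) = {G.tailA j k, G.bar (G.tailA j (k + 1))} := by
  ext a
  rw [mem_outF, Finset.mem_insert, Finset.mem_singleton]
  constructor
  · intro h
    rcases G.arcs_cover a with ha | ⟨j', k', ha | ha⟩
    · exact absurd (h ▸ (G.A0_ends a ha).1) (G.tailV_notin j k)
    · subst ha
      rw [G.tailA_o] at h
      obtain ⟨h1, h2⟩ := G.tailV_inj _ _ _ _ h
      left; rw [h1, h2]
    · subst ha
      rw [G.o_bar, G.tailA_t] at h
      cases k' with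
      | zero => exact absurd (h ▸ G.tailV_root j') (G.tailV_notin j k)
      | succ m =>
          obtain ⟨h1, h2⟩ := G.tailV_inj _ _ _ _ h
          right; rw [h1, h2]
  · rintro (rfl | rfl)
    · exact G.tailA_o j k
    · rw [G.o_bar, G.tailA_t]

lemma inF_eq_image (u : G.V) : inF G u = (outF G u).image G.bar := by
  ext b
  rw [mem_inF, Finset.mem_image]
  constructor
  · intro h
    exact ⟨G.bar b, mem_outF G |>.mpr (by rw [G.o_bar]; exact h), G.bar_inv b⟩
  · rintro ⟨a, ha, rfl⟩
    rw [G.t_bar]; exact mem_outF G |>.mp ha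

lemma inF_tail (j : Fin G.r) (k : ℕ) :
    inF G (G.tailV j (k + 1)) = {G.bar (G.tailA j k), G.tailA j (k + 1)} := by
  rw [inF_eq_image, outF_tail]
  rw [Finset.image_insert, Finset.image_singleton, G.bar_inv]

lemma mem_out_V0 {a : G.A} {u : G.V} (hu : u ∈ G.V0) (h : G.o a = u) :
    a ∈ G.A0 ∨ ∃ j, a = G.bar (G.tailA j 0) ∧ G.tailV j 0 = u := by
  rcases G.arcs_cover a with ha | ⟨j', k', ha | ha⟩
  · exact Or.inl ha
  · subst ha; rw [G.tailA_o] at h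
    exact absurd (h ▸ hu) (G.tailV_notin j' k')
  · subst ha; rw [G.o_bar, G.tailA_t] at h
    cases k' with
    | zero => exact Or.inr ⟨j', rfl, h⟩
    | succ m => exact absurd (h ▸ hu) (G.tailV_notin j' m)

lemma mem_in_V0 {b : G.A} {u : G.V} (hu : u ∈ G.V0) (h : G.t b = u) :
    b ∈ G.A0 ∨ ∃ j, b = G.tailA j 0 ∧ G.tailV j 0 = u := by
  rcases G.arcs_cover b with hb | ⟨j', k', hb | hb⟩
  · exact Or.inl hb
  · subst hb; rw [G.tailA_t] at h
    cases k' with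
    | zero => exact Or.inr ⟨j', rfl, h⟩
    | succ m => exact absurd (h ▸ hu) (G.tailV_notin j' m)
  · subst hb; rw [G.t_bar, G.tailA_o] at h
    exact absurd (h ▸ hu) (G.tailV_notin j' k')

lemma sqrt_half_sq : (Real.sqrt (1 / 2) : ℂ) * (Real.sqrt (1 / 2) : ℂ) = (1 / 2 : ℂ) := by
  norm_cast
  rw [Real.mul_self_sqrt]
  · norm_num
  · norm_num

lemma szegedy_tail_in (hp : TailTransition G p) (Ψ : G.A → ℂ) (j : Fin G.r) (k : ℕ) :
    szegedy G.toSymDigraph p Ψ (G.tailA j k) = Ψ (G.tailA j (k + 1)) := by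
  classical
  rw [szegedy_apply, G.tailA_o, inF_tail,
    Finset.sum_pair (fun h => tail_ne_bar G j k (by
      have := congrArg G.bar h
      rw [G.bar_inv] at this
      exact this))]
  rw [G.bar_inv, hp.2.1 j k, hp.2.2 j k]
  have h2 : 2 * (Real.sqrt (1/2) : ℂ) * ((Real.sqrt (1/2) : ℂ) * Ψ (G.bar (G.tailA j k))
      + (Real.sqrt (1/2) : ℂ) * Ψ (G.tailA j (k+1))) - Ψ (G.bar (G.tailA j k))
      = Ψ (G.tailA j (k+1)) := by
    have hh := sqrt_half_sq
    linear_combination (2 * Ψ (G.bar (G.tailA j k)) + 2 * Ψ (G.tailA j (k+1))) * hh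
  exact h2

end QWAux
namespace QWAux
open Finset Filter Complex
attribute [local instance] Classical.propDecidable
variable (G : TailedGraph) (p : G.A → ℝ)

lemma szegedy_tail_out (hp : TailTransition G p) (Ψ : G.A → ℂ) (j : Fin G.r) (k : ℕ) :
    szegedy G.toSymDigraph p Ψ (G.bar (G.tailA j (k + 1))) = Ψ (G.bar (G.tailA j k)) := by
  rw [szegedy_apply, G.o_bar, G.tailA_t, inF_tail,
    Finset.sum_pair (fun h => tail_ne_bar G j k (by
      have := congrArg G.bar h
      rw [G.bar_inv] at this
      exact this))]
  rw [G.bar_inv, G.bar_inv, hp.2.1 j k, hp.2.2 j k]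
  have hh := sqrt_half_sq
  linear_combination (2 * Ψ (G.bar (G.tailA j k)) + 2 * Ψ (G.tailA j (k+1))) * hh

lemma szegedy_congr (Ψ Φ : G.A → ℂ) (a : G.A)
    (h1 : ∀ b ∈ inF G (G.o a), Ψ b = Φ b) (h2 : Ψ (G.bar a) = Φ (G.bar a)) :
    szegedy G.toSymDigraph p Ψ a = szegedy G.toSymDigraph p Φ a := by
  rw [szegedy_apply, szegedy_apply, h2,
    Finset.sum_congr rfl fun b hb => by rw [h1 b hb]]

lemma szegedy_add (Ψ Φ : G.A → ℂ) (a : G.A) :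
    szegedy G.toSymDigraph p (fun b => Ψ b + Φ b) a
      = szegedy G.toSymDigraph p Ψ a + szegedy G.toSymDigraph p Φ a := by
  simp only [szegedy_apply, mul_add, Finset.sum_add_distrib]
  ring

lemma szegedy_smul (z : ℂ) (Ψ : G.A → ℂ) (a : G.A) :
    szegedy G.toSymDigraph p (fun b => z * Ψ b) a = z * szegedy G.toSymDigraph p Ψ a := by
  rw [szegedy_apply, szegedy_apply,
    show (∑ b ∈ inF G (G.o a), (Real.sqrt (p (G.bar b)) : ℂ) * (z * Ψ b))
      = z * ∑ b ∈ inF G (G.o a), (Real.sqrt (p (G.bar b)) : ℂ) * Ψ b by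
        rw [Finset.mul_sum]; exact Finset.sum_congr rfl fun b _ => by ring]
  ring

-- Finset boundary images
noncomputable def V0F : Finset G.V := G.V0_fin.toFinset
noncomputable def A0F : Finset G.A := G.A0_fin.toFinset
noncomputable def BoutF : Finset G.A := Finset.univ.image (fun j : Fin G.r => G.bar (G.tailA j 0))
noncomputable def BinF : Finset G.A := Finset.univ.image (fun j : Fin G.r => G.tailA j 0)

lemma mem_A0F {a : G.A} : a ∈ A0F G ↔ a ∈ G.A0 := Set.Finite.mem_toFinset _
lemma mem_V0F {u : G.V} : u ∈ V0F G ↔ u ∈ G.V0 := Set.Finite.mem_toFinset _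

lemma biUnion_outF :
    (V0F G).biUnion (fun u => outF G u) = A0F G ∪ BoutF G := by
  ext a
  rw [Finset.mem_biUnion, Finset.mem_union]
  constructor
  · rintro ⟨u, hu, ha⟩
    rcases mem_out_V0 G (mem_V0F G |>.mp hu) (mem_outF G |>.mp ha) with h | ⟨j, rfl, hj⟩
    · exact Or.inl (mem_A0F G |>.mpr h)
    · exact Or.inr (Finset.mem_image.mpr ⟨j, Finset.mem_univ j, rfl⟩)
  · rintro (h | h)
    · have hA := mem_A0F G |>.mp h
      exact ⟨G.o a, mem_V0F G |>.mpr (G.A0_ends a hA).1, mem_outF G |>.mpr rfl⟩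
    · obtain ⟨j, _, rfl⟩ := Finset.mem_image.mp h
      refine ⟨G.tailV j 0, mem_V0F G |>.mpr (G.tailV_root j), mem_outF G |>.mpr ?_⟩
      rw [G.o_bar, G.tailA_t]

lemma biUnion_inF :
    (V0F G).biUnion (fun u => inF G u) = A0F G ∪ BinF G := by
  ext b
  rw [Finset.mem_biUnion, Finset.mem_union]
  constructor
  · rintro ⟨u, hu, hb⟩
    rcases mem_in_V0 G (mem_V0F G |>.mp hu) (mem_inF G |>.mp hb) with h | ⟨j, rfl, hj⟩
    · exact Or.inl (mem_A0F G |>.mpr h)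
    · exact Or.inr (Finset.mem_image.mpr ⟨j, Finset.mem_univ j, rfl⟩)
  · rintro (h | h)
    · have hA := mem_A0F G |>.mp h
      exact ⟨G.t b, mem_V0F G |>.mpr (G.A0_ends b hA).2, mem_inF G |>.mpr rfl⟩
    · obtain ⟨j, _, rfl⟩ := Finset.mem_image.mp h
      exact ⟨G.tailV j 0, mem_V0F G |>.mpr (G.tailV_root j), mem_inF G |>.mpr (G.tailA_t j 0)⟩

lemma disj_out : Disjoint (A0F G) (BoutF G) := by
  rw [Finset.disjoint_right]
  intro a ha
  obtain ⟨j, _, rfl⟩ := Finset.mem_image.mp ha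
  exact fun h => bar_tail_nin G j 0 (mem_A0F G |>.mp h)

lemma disj_in : Disjoint (A0F G) (BinF G) := by
  rw [Finset.disjoint_right]
  intro a ha
  obtain ⟨j, _, rfl⟩ := Finset.mem_image.mp ha
  exact fun h => G.tailA_nin j 0 (mem_A0F G |>.mp h)

lemma pdisj_outF : (↑(V0F G) : Set G.V).PairwiseDisjoint (fun u => outF G u) := by
  intro u _ v _ huv
  simp only [Function.onFun, Finset.disjoint_left]
  intro a ha ha'
  exact huv ((mem_outF G |>.mp ha).symm.trans (mem_outF G |>.mp ha'))

lemma pdisj_inF : (↑(V0F G) : Set G.V).PairwiseDisjoint (fun u => inF G u) := by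
  intro u _ v _ huv
  simp only [Function.onFun, Finset.disjoint_left]
  intro a ha ha'
  exact huv ((mem_inF G |>.mp ha).symm.trans (mem_inF G |>.mp ha'))

lemma bar_tail_inj : Function.Injective (fun j : Fin G.r => G.bar (G.tailA j 0)) := by
  intro j j' h
  have h2 : G.tailA j 0 = G.tailA j' 0 := by
    have := congrArg G.bar h
    rwa [G.bar_inv, G.bar_inv] at this
  have h3 := tailA_inj G (show (fun jk : Fin G.r × ℕ => G.tailA jk.1 jk.2) (j, 0)
    = (fun jk : Fin G.r × ℕ => G.tailA jk.1 jk.2) (j', 0) from h2)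
  exact (Prod.ext_iff.mp h3).1

end QWAux
namespace QWAux
open Finset Filter Complex
attribute [local instance] Classical.propDecidable
variable (G : TailedGraph) (p : G.A → ℝ)

noncomputable abbrev EA := EuclideanSpace ℂ ↥(A0F G)

noncomputable def extA (x : EA G) : G.A → ℂ :=
  fun b => if h : b ∈ A0F G then x ⟨b, h⟩ else 0

noncomputable def resA (Φ : G.A → ℂ) : EA G := WithLp.toLp 2 (fun i => Φ i.val)

lemma extA_mem (x : EA G) {b : G.A} (h : b ∈ A0F G) : extA G x b = x ⟨b, h⟩ := dif_pos h
lemma extA_nmem (x : EA G) {b : G.A} (h : b ∉ A0F G) : extA G x b = 0 := dif_neg h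

noncomputable def opL : EA G →ₗ[ℂ] EA G where
  toFun x := WithLp.toLp 2 (fun i => szegedy G.toSymDigraph p (extA G x) i.val)
  map_add' x y := by
    ext i
    have hext : extA G (x + y) = fun b => extA G x b + extA G y b := by
      funext b
      by_cases h : b ∈ A0F G
      · rw [extA_mem G _ h]
        simp only [extA_mem G _ h]
        rfl
      · simp only [extA_nmem G _ h, add_zero]
    show szegedy G.toSymDigraph p (extA G (x + y)) i.val = _
    rw [hext, szegedy_add]
    rfl
  map_smul' z x := by
    ext i
    have hext : extA G (z • x) = fun b => z * extA G x b := by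
      funext b
      by_cases h : b ∈ A0F G
      · rw [extA_mem G _ h]
        simp only [extA_mem G _ h]
        rfl
      · simp only [extA_nmem G _ h, mul_zero]
    show szegedy G.toSymDigraph p (extA G (z • x)) i.val = _
    rw [hext, szegedy_smul]
    rfl

lemma opL_apply (x : EA G) (i : ↥(A0F G)) :
    opL G p x i = szegedy G.toSymDigraph p (extA G x) i.val := rfl

lemma norm_sq_EA (x : EA G) : ‖x‖ ^ 2 = ∑ a ∈ A0F G, Complex.normSq (extA G x a) := by
  rw [EuclideanSpace.norm_eq, Real.sq_sqrt (by positivity)]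
  rw [Finset.sum_subtype (A0F G) (fun a => Iff.rfl)
    (fun a => Complex.normSq (extA G x a))]
  refine Finset.sum_congr rfl fun i _ => ?_
  rw [show extA G x i.val = x i from by rw [extA_mem G x i.2]]
  rw [← Complex.sq_norm]

lemma opL_contraction (hp : TailTransition G p) (x : EA G) : ‖opL G p x‖ ≤ ‖x‖ := by
  have hsq : ‖opL G p x‖ ^ 2 ≤ ‖x‖ ^ 2 := by
    rw [norm_sq_EA, norm_sq_EA]
    have hL : ∑ a ∈ A0F G, Complex.normSq (extA G (opL G p x) a)
        = ∑ a ∈ A0F G, Complex.normSq (szegedy G.toSymDigraph p (extA G x) a) := by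
      refine Finset.sum_congr rfl fun a ha => ?_
      rw [extA_mem G _ ha, opL_apply]
    rw [hL]
    calc ∑ a ∈ A0F G, Complex.normSq (szegedy G.toSymDigraph p (extA G x) a)
        ≤ ∑ a ∈ A0F G ∪ BoutF G, Complex.normSq (szegedy G.toSymDigraph p (extA G x) a) :=
          Finset.sum_le_sum_of_subset_of_nonneg Finset.subset_union_left
            (fun a _ _ => Complex.normSq_nonneg _)
      _ = ∑ u ∈ V0F G, ∑ a ∈ outF G u, Complex.normSq (szegedy G.toSymDigraph p (extA G x) a) := by
          rw [← biUnion_outF, Finset.sum_biUnion (pdisj_outF G)]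
      _ = ∑ u ∈ V0F G, ∑ b ∈ inF G u, Complex.normSq (extA G x b) :=
          Finset.sum_congr rfl fun u _ => normSq_szegedy G p hp.1 (extA G x) u
      _ = ∑ b ∈ A0F G ∪ BinF G, Complex.normSq (extA G x b) := by
          rw [← biUnion_inF, Finset.sum_biUnion (pdisj_inF G)]
      _ = ∑ b ∈ A0F G, Complex.normSq (extA G x b) := by
          rw [Finset.sum_union (disj_in G)]
          have : ∑ b ∈ BinF G, Complex.normSq (extA G x b) = 0 := by
            refine Finset.sum_eq_zero fun b hb => ?_
            obtain ⟨j, _, rfl⟩ := Finset.mem_image.mp hb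
            rw [extA_nmem G x (fun h => G.tailA_nin j 0 (mem_A0F G |>.mp h))]
            simp
          rw [this, add_zero]
  nlinarith [norm_nonneg (opL G p x), norm_nonneg x]

end QWAux
namespace QWAux
open Finset Filter Complex
attribute [local instance] Classical.propDecidable
variable (G : TailedGraph) (p : G.A → ℝ)

lemma eigen_killed (hp : TailTransition G p) {μ : ℂ} {φ : EA G} (hμ : ‖μ‖ = 1)
    (hφ : opL G p φ = μ • φ) (j : Fin G.r) :
    szegedy G.toSymDigraph p (extA G φ) (G.bar (G.tailA j 0)) = 0 := by
  have hA0 : ∑ a ∈ A0F G, Complex.normSq (szegedy G.toSymDigraph p (extA G φ) a)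
      = ‖φ‖ ^ 2 := by
    rw [norm_sq_EA]
    refine Finset.sum_congr rfl fun a ha => ?_
    have h1 : szegedy G.toSymDigraph p (extA G φ) a = μ * extA G φ a := by
      have h0 : szegedy G.toSymDigraph p (extA G φ) a = opL G p φ ⟨a, ha⟩ := rfl
      rw [h0, hφ, extA_mem G φ ha]
      rfl
    rw [h1, Complex.normSq_mul,
      show Complex.normSq μ = 1 by
        rw [Complex.normSq_eq_norm_sq, hμ]; norm_num,
      one_mul]
  have htot : ∑ a ∈ A0F G ∪ BoutF G,
      Complex.normSq (szegedy G.toSymDigraph p (extA G φ) a) = ‖φ‖ ^ 2 := by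
    calc ∑ a ∈ A0F G ∪ BoutF G, Complex.normSq (szegedy G.toSymDigraph p (extA G φ) a)
        = ∑ u ∈ V0F G, ∑ a ∈ outF G u,
            Complex.normSq (szegedy G.toSymDigraph p (extA G φ) a) := by
          rw [← biUnion_outF, Finset.sum_biUnion (pdisj_outF G)]
      _ = ∑ u ∈ V0F G, ∑ b ∈ inF G u, Complex.normSq (extA G φ b) :=
          Finset.sum_congr rfl fun u _ => normSq_szegedy G p hp.1 (extA G φ) u
      _ = ∑ b ∈ A0F G ∪ BinF G, Complex.normSq (extA G φ b) := by
          rw [← biUnion_inF, Finset.sum_biUnion (pdisj_inF G)]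
      _ = ‖φ‖ ^ 2 := by
          rw [Finset.sum_union (disj_in G), ← norm_sq_EA]
          have : ∑ b ∈ BinF G, Complex.normSq (extA G φ b) = 0 := by
            refine Finset.sum_eq_zero fun b hb => ?_
            obtain ⟨j', _, rfl⟩ := Finset.mem_image.mp hb
            rw [extA_nmem G φ (fun h => G.tailA_nin j' 0 (mem_A0F G |>.mp h))]
            simp
          rw [this, add_zero]
  have hB : ∑ a ∈ BoutF G, Complex.normSq (szegedy G.toSymDigraph p (extA G φ) a) = 0 := by
    have := htot
    rw [Finset.sum_union (disj_out G), hA0] at this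
    linarith
  have hmem : G.bar (G.tailA j 0) ∈ BoutF G :=
    Finset.mem_image.mpr ⟨j, Finset.mem_univ j, rfl⟩
  have := (Finset.sum_eq_zero_iff_of_nonneg
    (fun a _ => Complex.normSq_nonneg _)).mp hB _ hmem
  exact Complex.normSq_eq_zero.mp this

lemma eigen_rho (hp : TailTransition G p) {μ : ℂ} {φ : EA G} (hμ : ‖μ‖ = 1)
    (hφ : opL G p φ = μ • φ) (j : Fin G.r) :
    ∑ b ∈ inF G (G.tailV j 0), (Real.sqrt (p (G.bar b)) : ℂ) * extA G φ b = 0 := by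
  have h0 := eigen_killed G p hp hμ hφ j
  rw [szegedy_apply, G.o_bar, G.tailA_t, G.bar_inv,
    extA_nmem G φ (fun h => G.tailA_nin j 0 (mem_A0F G |>.mp h)), sub_zero] at h0
  have hsqrt : (Real.sqrt (p (G.bar (G.tailA j 0))) : ℂ) ≠ 0 := by
    norm_cast
    exact Real.sqrt_ne_zero'.mpr (hp.1.1 _).1
  rcases mul_eq_zero.mp h0 with h | h
  · rcases mul_eq_zero.mp h with h' | h'
    · norm_num at h'
    · exact absurd h' hsqrt
  · exact h

lemma eigen_sigma (hp : TailTransition G p) {μ : ℂ} {φ : EA G} (hμ : ‖μ‖ = 1)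
    (hφ : opL G p φ = μ • φ) (j : Fin G.r) :
    ∑ a ∈ outF G (G.tailV j 0), (Real.sqrt (p a) : ℂ) * extA G φ a = 0 := by
  have h1 := rho_szegedy G p hp.1 (extA G φ) (G.tailV j 0)
  rw [eigen_rho G p hp hμ hφ j] at h1
  have hterm : ∀ a ∈ outF G (G.tailV j 0),
      (Real.sqrt (p a) : ℂ) * szegedy G.toSymDigraph p (extA G φ) a
        = μ * ((Real.sqrt (p a) : ℂ) * extA G φ a) := by
    intro a ha
    rcases mem_out_V0 G (G.tailV_root j) (mem_outF G |>.mp ha) with hA | ⟨j', rfl, _⟩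
    · have ha' : a ∈ A0F G := mem_A0F G |>.mpr hA
      have h2 : szegedy G.toSymDigraph p (extA G φ) a = μ * extA G φ a := by
        have h0 : szegedy G.toSymDigraph p (extA G φ) a = opL G p φ ⟨a, ha'⟩ := rfl
        rw [h0, hφ, extA_mem G φ ha']
        rfl
      rw [h2]; ring
    · rw [eigen_killed G p hp hμ hφ j',
        extA_nmem G φ (fun h => bar_tail_nin G j' 0 (mem_A0F G |>.mp h))]
      ring
  rw [Finset.sum_congr rfl hterm, ← Finset.mul_sum] at h1
  have hμ0 : μ ≠ 0 := by
    intro h; rw [h] at hμ; simp at hμ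
  exact (mul_eq_zero.mp h1).resolve_left hμ0

lemma c_orth (hp : TailTransition G p) (Ψ0 : G.A → ℂ)
    (h0out : ∀ a : G.A, (∀ j k, a ≠ G.tailA j k) → Ψ0 a = 0)
    {μ : ℂ} {φ : EA G} (hμ : ‖μ‖ = 1) (hφ : opL G p φ = μ • φ) :
    (inner ℂ φ (resA G (szegedy G.toSymDigraph p Ψ0)) : ℂ) = 0 := by
  have key : ∀ u ∈ V0F G,
      (2 : ℂ) * (∑ b ∈ inF G u, (Real.sqrt (p (G.bar b)) : ℂ) * Ψ0 b)
        * (starRingEnd ℂ) (∑ a ∈ outF G u, (Real.sqrt (p a) : ℂ) * extA G φ a) = 0 := by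
    intro u hu
    by_cases hroot : ∃ j, G.tailV j 0 = u
    · obtain ⟨j, hj⟩ := hroot
      rw [← hj, eigen_sigma G p hp hμ hφ j, map_zero, mul_zero]
    · have hz : ∑ b ∈ inF G u, (Real.sqrt (p (G.bar b)) : ℂ) * Ψ0 b = 0 := by
        refine Finset.sum_eq_zero fun b hb => ?_
        rcases mem_in_V0 G (mem_V0F G |>.mp hu) (mem_inF G |>.mp hb) with hA | ⟨j, rfl, hj⟩
        · rw [h0out b (fun j k h => G.tailA_nin j k (h ▸ hA)), mul_zero]
        · exact absurd ⟨j, hj⟩ hroot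
      rw [hz, mul_zero, zero_mul]
  calc (inner ℂ φ (resA G (szegedy G.toSymDigraph p Ψ0)) : ℂ)
      = ∑ a ∈ A0F G, (starRingEnd ℂ) (extA G φ a) *
          (2 * (Real.sqrt (p a) : ℂ) *
            ∑ b ∈ inF G (G.o a), (Real.sqrt (p (G.bar b)) : ℂ) * Ψ0 b) := by
        rw [PiLp.inner_apply,
          Finset.sum_subtype (A0F G) (fun a => Iff.rfl)
            (fun a => (starRingEnd ℂ) (extA G φ a) * (2 * (Real.sqrt (p a) : ℂ) *
              ∑ b ∈ inF G (G.o a), (Real.sqrt (p (G.bar b)) : ℂ) * Ψ0 b))]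
        refine Finset.sum_congr rfl fun i _ => ?_
        have h1 : Ψ0 (G.bar i.val) = 0 := by
          refine h0out _ fun j k h => ?_
          have hbar : G.bar i.val ∈ G.A0 := G.A0_bar _ (mem_A0F G |>.mp i.2)
          exact G.tailA_nin j k (h ▸ hbar)
        show (inner ℂ (φ i) (resA G (szegedy G.toSymDigraph p Ψ0) i) : ℂ) = _
        have h2 : (inner ℂ (φ i) (resA G (szegedy G.toSymDigraph p Ψ0) i) : ℂ)
            = (starRingEnd ℂ) (φ i) * szegedy G.toSymDigraph p Ψ0 i.val := by
          rw [RCLike.inner_apply']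
          rfl
        rw [h2, szegedy_apply, h1, sub_zero, extA_mem G φ i.2, Subtype.coe_eta]
    _ = ∑ a ∈ (V0F G).biUnion (fun u => outF G u), (starRingEnd ℂ) (extA G φ a) *
          (2 * (Real.sqrt (p a) : ℂ) *
            ∑ b ∈ inF G (G.o a), (Real.sqrt (p (G.bar b)) : ℂ) * Ψ0 b) := by
        refine Finset.sum_subset ?_ ?_
        · rw [biUnion_outF]; exact Finset.subset_union_left
        · intro a ha hna
          rw [biUnion_outF] at ha
          rcases Finset.mem_union.mp ha with h | h
          · exact absurd h hna
          · obtain ⟨j', _, rfl⟩ := Finset.mem_image.mp h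
            rw [extA_nmem G φ (fun hh => bar_tail_nin G j' 0 (mem_A0F G |>.mp hh))]
            simp
    _ = ∑ u ∈ V0F G, ∑ a ∈ outF G u, (starRingEnd ℂ) (extA G φ a) *
          (2 * (Real.sqrt (p a) : ℂ) *
            ∑ b ∈ inF G (G.o a), (Real.sqrt (p (G.bar b)) : ℂ) * Ψ0 b) :=
        Finset.sum_biUnion (pdisj_outF G)
    _ = ∑ u ∈ V0F G,
          (2 : ℂ) * (∑ b ∈ inF G u, (Real.sqrt (p (G.bar b)) : ℂ) * Ψ0 b)
            * (starRingEnd ℂ) (∑ a ∈ outF G u, (Real.sqrt (p a) : ℂ) * extA G φ a) := by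
        refine Finset.sum_congr rfl fun u _ => ?_
        rw [map_sum, Finset.mul_sum]
        refine Finset.sum_congr rfl fun a ha => ?_
        rw [mem_outF G |>.mp ha, map_mul, Complex.conj_ofReal]
        ring
    _ = 0 := Finset.sum_eq_zero key

end QWAux


open Filter Finset

local notation "⟪" x ", " y "⟫" => @inner ℂ _ _ x y

lemma aux_adjoint_contraction {E : Type*} [NormedAddCommGroup E]
    [InnerProductSpace ℂ E] [FiniteDimensional ℂ E]
    (L : E →ₗ[ℂ] E) (hL : ∀ x, ‖L x‖ ≤ ‖x‖) (x : E) :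
    ‖LinearMap.adjoint L x‖ ≤ ‖x‖ := by
  by_cases h0 : ‖LinearMap.adjoint L x‖ = 0
  · rw [h0]; exact norm_nonneg x
  · have h1 : ‖LinearMap.adjoint L x‖ ^ 2 ≤ ‖x‖ * ‖LinearMap.adjoint L x‖ := by
      have h : (‖LinearMap.adjoint L x‖ : ℝ) ^ 2 =
          RCLike.re ⟪x, L (LinearMap.adjoint L x)⟫ := by
        rw [← LinearMap.adjoint_inner_left, @inner_self_eq_norm_sq ℂ]
      rw [h]
      calc RCLike.re ⟪x, L (LinearMap.adjoint L x)⟫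
          ≤ ‖⟪x, L (LinearMap.adjoint L x)⟫‖ := RCLike.re_le_norm _
        _ ≤ ‖x‖ * ‖L (LinearMap.adjoint L x)‖ := norm_inner_le_norm _ _
        _ ≤ ‖x‖ * ‖LinearMap.adjoint L x‖ :=
            mul_le_mul_of_nonneg_left (hL _) (norm_nonneg _)
    have hpos : 0 < ‖LinearMap.adjoint L x‖ :=
      lt_of_le_of_ne (norm_nonneg _) (Ne.symm h0)
    nlinarith

lemma aux_adjoint_eigen {E : Type*} [NormedAddCommGroup E]
    [InnerProductSpace ℂ E] [FiniteDimensional ℂ E]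
    (L : E →ₗ[ℂ] E) (hL : ∀ x, ‖L x‖ ≤ ‖x‖) {μ : ℂ} {φ : E}
    (hμ : ‖μ‖ = 1) (hφ : L φ = μ • φ) :
    LinearMap.adjoint L φ = (starRingEnd ℂ μ) • φ := by
  have hμμ : (starRingEnd ℂ μ) * μ = 1 := by
    rw [mul_comm, Complex.mul_conj, Complex.normSq_eq_norm_sq, hμ]
    norm_num
  have hinner : ⟪LinearMap.adjoint L φ, (starRingEnd ℂ μ) • φ⟫ = (‖φ‖ : ℂ) ^ 2 := by
    rw [inner_smul_right, LinearMap.adjoint_inner_left, hφ, inner_smul_right,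
      inner_self_eq_norm_sq_to_K, ← mul_assoc, hμμ, one_mul]
    norm_cast
  have h2 : ‖(starRingEnd ℂ μ) • φ‖ = ‖φ‖ := by
    rw [norm_smul, RCLike.norm_conj, hμ, one_mul]
  have h3 : ‖LinearMap.adjoint L φ‖ ≤ ‖φ‖ := aux_adjoint_contraction L hL φ
  have hre : RCLike.re ⟪LinearMap.adjoint L φ, (starRingEnd ℂ μ) • φ⟫ = ‖φ‖ ^ 2 := by
    rw [hinner]; norm_cast
  have key : ‖LinearMap.adjoint L φ - (starRingEnd ℂ μ) • φ‖ ^ 2 ≤ 0 := by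
    rw [@norm_sub_sq ℂ, hre, h2]
    nlinarith [norm_nonneg (LinearMap.adjoint L φ), norm_nonneg φ]
  have h0 : ‖LinearMap.adjoint L φ - (starRingEnd ℂ μ) • φ‖ = 0 := by
    nlinarith [sq_nonneg ‖LinearMap.adjoint L φ - (starRingEnd ℂ μ) • φ‖,
      norm_nonneg (LinearMap.adjoint L φ - (starRingEnd ℂ μ) • φ)]
  rwa [norm_eq_zero, sub_eq_zero] at h0

lemma aux_converges {E : Type*} [NormedAddCommGroup E]
    [InnerProductSpace ℂ E] [FiniteDimensional ℂ E]
    (L : E →ₗ[ℂ] E) (hL : ∀ x, ‖L x‖ ≤ ‖x‖) (c : E)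
    (hc : ∀ (μ : ℂ) (φ : E), ‖μ‖ = 1 → L φ = μ • φ → ⟪φ, c⟫ = 0) :
    ∃ x : E, Tendsto (fun n => ∑ m ∈ Finset.range n, (L ^ m) c) atTop (nhds x) := by
  classical
  set S : Set E := {φ | ∃ μ : ℂ, ‖μ‖ = 1 ∧ L φ = μ • φ} with hS
  set W : Submodule ℂ E := Submodule.span ℂ S with hW
  have hWperp : ∀ x ∈ Wᗮ, L x ∈ Wᗮ := by
    intro x hx
    rw [Submodule.mem_orthogonal]
    intro u hu
    induction hu using Submodule.span_induction with
    | mem φ hφ =>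
        obtain ⟨μ, hμ1, hμe⟩ := id hφ
        rw [← LinearMap.adjoint_inner_left, aux_adjoint_eigen L hL hμ1 hμe,
          inner_smul_left,
          (Submodule.mem_orthogonal W x).mp hx φ (Submodule.subset_span hφ), mul_zero]
    | zero => exact inner_zero_left _
    | add u v _ _ hu hv => rw [inner_add_left, hu, hv, add_zero]
    | smul a u _ hu => rw [inner_smul_left, hu, mul_zero]
  have hcW : c ∈ Wᗮ := by
    rw [Submodule.mem_orthogonal]
    intro u hu
    induction hu using Submodule.span_induction with
    | mem φ hφ => obtain ⟨μ, hμ1, hμe⟩ := hφ; exact hc μ φ hμ1 hμe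
    | zero => exact inner_zero_left _
    | add u v _ _ hu hv => rw [inner_add_left, hu, hv, add_zero]
    | smul a u _ hu => rw [inner_smul_left, hu, mul_zero]
  set L' : ↥Wᗮ →ₗ[ℂ] ↥Wᗮ := L.restrict hWperp with hL'
  have heig : ∀ μ ∈ spectrum ℂ L', ‖μ‖ < 1 := by
    intro μ hμ
    obtain ⟨ψ, hψvec⟩ :=
      (Module.End.hasEigenvalue_iff_mem_spectrum.mpr hμ).exists_hasEigenvector
    have happ : L' ψ = μ • ψ := hψvec.apply_eq_smul
    have hψ0 : ψ ≠ 0 := hψvec.right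
    have hcoe : L (ψ : E) = μ • (ψ : E) := by
      have := congrArg (Subtype.val) happ
      rwa [LinearMap.restrict_coe_apply] at this
    have hψn : 0 < ‖(ψ : E)‖ := by
      rw [norm_pos_iff]
      exact fun h => hψ0 (by ext; simp [h])
    have hle : ‖μ‖ ≤ 1 := by
      have h1 : ‖μ‖ * ‖(ψ : E)‖ ≤ ‖(ψ : E)‖ := by
        rw [← norm_smul, ← hcoe]; exact hL _
      nlinarith
    rcases lt_or_eq_of_le hle with h | h
    · exact h
    · exfalso
      have hmem : (ψ : E) ∈ W := Submodule.subset_span ⟨μ, h, hcoe⟩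
      have : (ψ : E) ∈ W ⊓ Wᗮ := ⟨hmem, ψ.2⟩
      rw [Submodule.inf_orthogonal_eq_bot, Submodule.mem_bot] at this
      exact hψ0 (by ext; simp [this])
  -- bound on spectral radius
  set Sfin := (Module.End.finite_spectrum L').toFinset with hSfin
  set rr : ℝ := (insert (0:ℝ) (Sfin.image norm)).max' ⟨0, Finset.mem_insert_self _ _⟩ with hrr
  have hr0 : 0 ≤ rr := Finset.le_max' _ _ (Finset.mem_insert_self _ _)
  have hr1 : rr < 1 := by
    apply Finset.max'_lt_iff _ _ |>.mpr
    intro y hy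
    rcases Finset.mem_insert.mp hy with h | h
    · rw [h]; norm_num
    · obtain ⟨μ, hμ, rfl⟩ := Finset.mem_image.mp h
      exact heig μ (by simpa [hSfin] using hμ)
  have hbound : ∀ μ ∈ spectrum ℂ L', ‖μ‖ ≤ rr :=
    fun μ hμ => Finset.le_max' _ _ (Finset.mem_insert_of_mem
      (Finset.mem_image_of_mem _ (by simpa [hSfin] using hμ)))
  set ρ : ℝ := (1 + rr) / 2 with hρ
  have hρ0 : 0 < ρ := by rw [hρ]; linarith
  have hρ1 : ρ < 1 := by rw [hρ]; linarith
  have hrρ : rr < ρ := by rw [hρ]; linarith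
  set T := Module.End.toContinuousLinearMap (↥Wᗮ) L' with hT
  have hspec : spectrum ℂ T = spectrum ℂ L' :=
    AlgEquiv.spectrum_eq (Module.End.toContinuousLinearMap (↥Wᗮ)) L'
  have hrad : spectralRadius ℂ T ≤ ENNReal.ofReal rr := by
    simp only [spectralRadius]
    refine iSup₂_le fun μ hμ => ?_
    rw [← ENNReal.ofReal_coe_nnreal, coe_nnnorm]
    exact ENNReal.ofReal_le_ofReal (hbound μ (hspec ▸ hμ))
  have hradρ : spectralRadius ℂ T < ENNReal.ofReal ρ :=
    lt_of_le_of_lt hrad ((ENNReal.ofReal_lt_ofReal_iff hρ0).mpr hrρ)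
  have hev : ∀ᶠ n : ℕ in atTop,
      ENNReal.ofReal (‖T ^ n‖ ^ (1 / (n:ℝ))) < ENNReal.ofReal ρ :=
    (spectrum.pow_norm_pow_one_div_tendsto_nhds_spectralRadius T).eventually_lt_const hradρ
  set c' : ↥Wᗮ := ⟨c, hcW⟩ with hc'
  have hTL : ∀ (n : ℕ), (T ^ n) c' = (L' ^ n) c' := by
    intro n
    rw [hT, ← map_pow]
    rfl
  have hbnd : ∀ᶠ n : ℕ in atTop, ‖(L' ^ n) c'‖ ≤ ‖c'‖ * ρ ^ n := by
    filter_upwards [hev, Filter.eventually_ge_atTop 1] with n hn hn1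
    have hlt : ‖T ^ n‖ ^ (1 / (n:ℝ)) < ρ := by
      rwa [ENNReal.ofReal_lt_ofReal_iff hρ0] at hn
    have h0 : (0:ℝ) ≤ ‖T ^ n‖ := norm_nonneg _
    have hTn : ‖T ^ n‖ ≤ ρ ^ n := by
      have heq : ‖T ^ n‖ = (‖T ^ n‖ ^ (1 / (n:ℝ))) ^ (n:ℕ) := by
        rw [← Real.rpow_natCast (‖T ^ n‖ ^ (1 / (n:ℝ))) n, ← Real.rpow_mul h0,
          one_div_mul_cancel (by exact_mod_cast Nat.one_le_iff_ne_zero.mp hn1), Real.rpow_one]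
      rw [heq]
      exact pow_le_pow_left₀ (Real.rpow_nonneg h0 _) hlt.le n
    calc ‖(L' ^ n) c'‖ = ‖(T ^ n) c'‖ := by rw [hTL]
      _ ≤ ‖T ^ n‖ * ‖c'‖ := (T ^ n).le_opNorm c'
      _ ≤ ρ ^ n * ‖c'‖ := mul_le_mul_of_nonneg_right hTn (norm_nonneg _)
      _ = ‖c'‖ * ρ ^ n := mul_comm _ _
  have hsum : Summable (fun n : ℕ => (L' ^ n) c') := by
    apply summable_of_isBigO_nat (summable_geometric_of_lt_one hρ0.le hρ1)
    apply Asymptotics.IsBigO.of_bound ‖c'‖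
    filter_upwards [hbnd] with n hn
    calc ‖(L' ^ n) c'‖ ≤ ‖c'‖ * ρ ^ n := hn
      _ = ‖c'‖ * ‖ρ ^ n‖ := by rw [Real.norm_of_nonneg (pow_nonneg hρ0.le n)]
  have ht := hsum.hasSum.tendsto_sum_nat
  have hcoe : ∀ (m : ℕ) (y : ↥Wᗮ), ((L' ^ m) y : E) = (L ^ m) (y : E) := by
    intro m
    induction m with
    | zero => intro y; simp
    | succ m ih =>
        intro y
        rw [pow_succ, pow_succ, Module.End.mul_apply, Module.End.mul_apply, ih,
          LinearMap.restrict_coe_apply]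
  refine ⟨(∑' n, (L' ^ n) c' : ↥Wᗮ), ?_⟩
  have hfun : (fun n => ∑ m ∈ Finset.range n, (L ^ m) c)
      = fun n => ((∑ m ∈ Finset.range n, (L' ^ m) c' : ↥Wᗮ) : E) := by
    funext n
    rw [Submodule.coe_sum]
    exact Finset.sum_congr rfl fun m _ => (hcoe m c').symm
  rw [hfun]
  exact (continuous_subtype_val.tendsto _).comp ht

namespace QWAux
open Finset Filter

lemma sum_exists_lim {ι : Type*} (s : Finset ι) (f : ι → ℕ → ℂ)
    (h : ∀ b ∈ s, ∃ z, Tendsto (f b) atTop (nhds z)) :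
    ∃ Z, Tendsto (fun n => ∑ b ∈ s, f b n) atTop (nhds Z) := by
  classical
  induction s using Finset.induction_on with
  | empty => exact ⟨0, by simpa using (tendsto_const_nhds : Tendsto (fun _ : ℕ => (0:ℂ)) _ _)⟩
  | insert b s' hmem ih =>
      obtain ⟨z, hz⟩ := h b (Finset.mem_insert_self _ _)
      obtain ⟨Z, hZ⟩ := ih (fun b' hb' => h b' (Finset.mem_insert_of_mem hb'))
      exact ⟨z + Z, by simpa [Finset.sum_insert hmem] using hz.add hZ⟩

end QWAux


open Filter

/-- the walk converges pointwise to a stationary state `Ψ∞`,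
which is a fixed point of the Szegedy evolution. -/
theorem stationary_state_exists (G : TailedGraph) (p : G.A → ℝ)
    (hp : TailTransition G p)
    (α : Fin G.r → ℂ) (Ψ : ℕ → G.A → ℂ)
    (h0in : ∀ j k, Ψ 0 (G.tailA j k) = α j)
    (h0out : ∀ a : G.A, (∀ j k, a ≠ G.tailA j k) → Ψ 0 a = 0)
    (hstep : ∀ n, Ψ (n + 1) = szegedy G.toSymDigraph p (Ψ n)) :
    ∃ Ψinf : G.A → ℂ,
      (∀ a : G.A,
        Filter.Tendsto (fun n => Ψ n a) Filter.atTop (nhds (Ψinf a))) ∧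
      szegedy G.toSymDigraph p Ψinf = Ψinf := by
  classical
  -- tail invariance of the inward amplitudes
  have htail : ∀ n j k, Ψ n (G.tailA j k) = α j := by
    intro n
    induction n with
    | zero => exact h0in
    | succ n ih =>
        intro j k
        rw [hstep n, QWAux.szegedy_tail_in G p hp (Ψ n) j k]
        exact ih j (k + 1)
  set L : QWAux.EA G →ₗ[ℂ] QWAux.EA G := QWAux.opL G p with hLdef
  set c : QWAux.EA G := QWAux.resA G (szegedy G.toSymDigraph p (Ψ 0)) with hcdef
  -- affine dynamics on the internal arcs
  have hdyn : ∀ n, QWAux.resA G (Ψ (n + 1)) = L (QWAux.resA G (Ψ n)) + c := by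
    intro n
    ext i
    show Ψ (n + 1) i.val = L (QWAux.resA G (Ψ n)) i + c i
    rw [hstep n]
    have hsz : szegedy G.toSymDigraph p (Ψ n) i.val
        = szegedy G.toSymDigraph p
            (fun b => QWAux.extA G (QWAux.resA G (Ψ n)) b + Ψ 0 b) i.val := by
      apply QWAux.szegedy_congr
      · intro b hb
        have hoi : G.o i.val ∈ G.V0 := (G.A0_ends _ (QWAux.mem_A0F G |>.mp i.2)).1
        rcases QWAux.mem_in_V0 G hoi (QWAux.mem_inF G |>.mp hb) with hA | ⟨j, rfl, hj⟩
        · have hbF : b ∈ QWAux.A0F G := QWAux.mem_A0F G |>.mpr hA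
          rw [QWAux.extA_mem G _ hbF,
            h0out _ (fun j k h => G.tailA_nin j k (h ▸ hA)), add_zero]
          rfl
        · rw [QWAux.extA_nmem G _ (fun h => G.tailA_nin j 0 (QWAux.mem_A0F G |>.mp h)),
            zero_add, htail n j 0, h0in j 0]
      · have hbA : G.bar i.val ∈ G.A0 := G.A0_bar _ (QWAux.mem_A0F G |>.mp i.2)
        rw [QWAux.extA_mem G _ (QWAux.mem_A0F G |>.mpr hbA),
          h0out _ (fun j k h => G.tailA_nin j k (h ▸ hbA)), add_zero]
        rfl
    rw [hsz, QWAux.szegedy_add]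
    rfl
  -- closed form: partial sums of the geometric-type series
  have hres : ∀ n, QWAux.resA G (Ψ n) = ∑ m ∈ Finset.range n, (L ^ m) c := by
    intro n
    induction n with
    | zero =>
        rw [Finset.range_zero, Finset.sum_empty]
        ext i
        show Ψ 0 i.val = 0
        exact h0out _ (fun j k h => G.tailA_nin j k (h ▸ (QWAux.mem_A0F G |>.mp i.2)))
    | succ n ih =>
        rw [hdyn n, ih, Finset.sum_range_succ' (fun m => (L ^ m) c) n, map_sum]
        have h1 : ∀ m, L ((L ^ m) c) = (L ^ (m + 1)) c := fun m => by
          rw [pow_succ']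
          rfl
        have h2 : (L ^ 0) c = c := by
          rw [pow_zero]
          rfl
        rw [Finset.sum_congr rfl (fun m _ => h1 m), h2]
  obtain ⟨xinf, hxconv⟩ := aux_converges L (QWAux.opL_contraction G p hp) c
    (fun μ φ hμ hφ => QWAux.c_orth G p hp (Ψ 0) h0out hμ hφ)
  have hresconv : Tendsto (fun n => QWAux.resA G (Ψ n)) atTop (nhds xinf) := by
    have heq : (fun n => QWAux.resA G (Ψ n)) = fun n => ∑ m ∈ Finset.range n, (L ^ m) c :=
      funext hres
    rw [heq]
    exact hxconv
  have hA0conv : ∀ (a : G.A) (h : a ∈ QWAux.A0F G),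
      Tendsto (fun n => Ψ n a) atTop (nhds (xinf ⟨a, h⟩)) := by
    intro a h
    have := ((PiLp.proj (𝕜 := ℂ) 2 _ (⟨a, h⟩ : ↥(QWAux.A0F G))).continuous.tendsto
      xinf).comp hresconv
    exact this
  -- convergence on every arc
  have hconv_all : ∀ a : G.A, ∃ z, Tendsto (fun n => Ψ n a) atTop (nhds z) := by
    have hIn : ∀ (j : Fin G.r) (k : ℕ), ∃ z,
        Tendsto (fun n => Ψ n (G.tailA j k)) atTop (nhds z) := by
      intro j k
      exact ⟨α j, Tendsto.congr (fun n => (htail n j k).symm) tendsto_const_nhds⟩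
    have hOut : ∀ (k : ℕ) (j : Fin G.r), ∃ z,
        Tendsto (fun n => Ψ n (G.bar (G.tailA j k))) atTop (nhds z) := by
      intro k
      induction k with
      | zero =>
          intro j
          obtain ⟨Z, hZ⟩ := QWAux.sum_exists_lim (QWAux.inF G (G.tailV j 0))
            (fun b n => (Real.sqrt (p (G.bar b)) : ℂ) * Ψ n b) (by
              intro b hb
              rcases QWAux.mem_in_V0 G (G.tailV_root j) (QWAux.mem_inF G |>.mp hb)
                with hA | ⟨j', rfl, _⟩
              · exact ⟨_, (hA0conv b (QWAux.mem_A0F G |>.mpr hA)).const_mul _⟩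
              · obtain ⟨z, hz⟩ := hIn j' 0
                exact ⟨_, hz.const_mul _⟩)
          refine ⟨2 * (Real.sqrt (p (G.bar (G.tailA j 0))) : ℂ) * Z - α j, ?_⟩
          rw [← tendsto_add_atTop_iff_nat 1]
          have hform : (fun n => Ψ (n + 1) (G.bar (G.tailA j 0)))
              = fun n => 2 * (Real.sqrt (p (G.bar (G.tailA j 0))) : ℂ) *
                  (∑ b ∈ QWAux.inF G (G.tailV j 0),
                    (Real.sqrt (p (G.bar b)) : ℂ) * Ψ n b) - α j := by
            funext n
            rw [hstep n, QWAux.szegedy_apply, G.o_bar, G.tailA_t, G.bar_inv, htail n j 0]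
          rw [hform]
          exact (hZ.const_mul _).sub tendsto_const_nhds
      | succ k ih =>
          intro j
          obtain ⟨z, hz⟩ := ih j
          refine ⟨z, ?_⟩
          rw [← tendsto_add_atTop_iff_nat 1]
          have hform : (fun n => Ψ (n + 1) (G.bar (G.tailA j (k + 1))))
              = fun n => Ψ n (G.bar (G.tailA j k)) := by
            funext n
            rw [hstep n, QWAux.szegedy_tail_out G p hp (Ψ n) j k]
          rw [hform]
          exact hz
    intro a
    rcases G.arcs_cover a with hA | ⟨j, k, rfl | rfl⟩
    · exact ⟨_, hA0conv a (QWAux.mem_A0F G |>.mpr hA)⟩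
    · exact hIn j k
    · exact hOut k j
  set Ψinf : G.A → ℂ := fun a => Classical.choose (hconv_all a) with hΨinf
  have htend : ∀ a, Tendsto (fun n => Ψ n a) atTop (nhds (Ψinf a)) :=
    fun a => Classical.choose_spec (hconv_all a)
  refine ⟨Ψinf, htend, ?_⟩
  funext a
  have h1 : Tendsto (fun n => szegedy G.toSymDigraph p (Ψ n) a) atTop
      (nhds (szegedy G.toSymDigraph p Ψinf a)) := by
    have hseq : (fun n => szegedy G.toSymDigraph p (Ψ n) a)
        = fun n => 2 * (Real.sqrt (p a) : ℂ) *
            (∑ b ∈ QWAux.inF G (G.o a), (Real.sqrt (p (G.bar b)) : ℂ) * Ψ n b)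
          - Ψ n (G.bar a) := funext fun n => QWAux.szegedy_apply G p (Ψ n) a
    rw [hseq, QWAux.szegedy_apply]
    exact (Tendsto.const_mul _ (tendsto_finset_sum _
      (fun b _ => (htend b).const_mul _))).sub (htend (G.bar a))
  have h2 : Tendsto (fun n => szegedy G.toSymDigraph p (Ψ n) a) atTop (nhds (Ψinf a)) := by
    have hseq : (fun n => szegedy G.toSymDigraph p (Ψ n) a) = fun n => Ψ (n + 1) a := by
      funext n
      rw [hstep n]
    rw [hseq]
    exact (tendsto_add_atTop_iff_nat 1).mpr (htend a)
  exact tendsto_nhds_unique h1 h2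
end

section
/- For every n ≥ 0, every j ∈ {1,…,r}, and every inward arc a of tail j, the walk satisfies Ψ_n(a) = α_j; that is, the inflow values on the inward tail arcs are invariant under the time evolution. -/
open scoped BigOperators

/-- `Ψ` is a stationary state with boundary data `α β : ℂ^r`:
`UΨ = Ψ`, `Ψ = α_j` on the inward arcs of tail `j` and `Ψ = β_j` on the
outward arcs of tail `j`. -/
def TailIsStationary (G : TailedGraph) (p : G.A → ℝ) (Ψ : G.A → ℂ)
    (α β : Fin G.r → ℂ) : Prop :=
  szegedy G.toSymDigraph p Ψ = Ψ ∧
  (∀ j k, Ψ (G.tailA j k) = α j) ∧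
  ∀ j k, Ψ (G.bar (G.tailA j k)) = β j

lemma tail_set_eq (G : TailedGraph) (j : Fin G.r) (k : ℕ) :
    {b : G.A | G.t b = G.tailV j (k + 1)} =
      {G.tailA j (k + 1), G.bar (G.tailA j k)} := by
  ext b
  simp only [Set.mem_setOf_eq, Set.mem_insert_iff, Set.mem_singleton_iff]
  constructor
  · intro hb
    rcases G.arcs_cover b with h0 | ⟨j', k', h | h⟩
    · exact absurd (hb ▸ (G.A0_ends b h0).2) (G.tailV_notin j k)
    · subst h
      rw [G.tailA_t] at hb
      cases k' with
      | zero => exact absurd (hb ▸ G.tailV_root j') (G.tailV_notin j k)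
      | succ m =>
        obtain ⟨hj, hk⟩ := G.tailV_inj j' m j k hb
        subst hj; subst hk; left; rfl
    · subst h
      rw [G.t_bar, G.tailA_o] at hb
      obtain ⟨hj, hk⟩ := G.tailV_inj j' k' j k hb
      subst hj; subst hk; right; rfl
  · rintro (rfl | rfl)
    · rw [G.tailA_t]
    · rw [G.t_bar, G.tailA_o]

lemma tail_ne (G : TailedGraph) (j : Fin G.r) (k : ℕ) :
    G.tailA j (k + 1) ≠ G.bar (G.tailA j k) := by
  intro h
  have ho : G.o (G.tailA j (k + 1)) = G.o (G.bar (G.tailA j k)) := by rw [h]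
  rw [G.tailA_o, G.o_bar, G.tailA_t] at ho
  cases k with
  | zero => exact G.tailV_notin j 1 (ho ▸ G.tailV_root j)
  | succ m =>
    obtain ⟨_, hk⟩ := G.tailV_inj j (m + 2) j m ho
    omega

lemma szegedy_tail (G : TailedGraph) (p : G.A → ℝ) (hp : TailTransition G p)
    (Ψ : G.A → ℂ) (j : Fin G.r) (k : ℕ) :
    szegedy G.toSymDigraph p Ψ (G.tailA j k) = Ψ (G.tailA j (k + 1)) := by
  unfold szegedy
  rw [G.tailA_o, tail_set_eq, finsum_mem_pair (tail_ne G j k)]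
  rw [G.bar_inv (G.tailA j k)]
  rw [hp.2.1 j k, hp.2.2 j k]
  set s : ℂ := (Real.sqrt (1 / 2) : ℂ)
  have hs : s * s = 1 / 2 := by
    have : Real.sqrt (1 / 2) * Real.sqrt (1 / 2) = 1 / 2 :=
      Real.mul_self_sqrt (by norm_num)
    simp only [s, ← Complex.ofReal_mul, this]
    norm_num
  have h2 : (2 : ℂ) * s * (s * Ψ (G.tailA j (k + 1)) + s * Ψ (G.bar (G.tailA j k)))
      - Ψ (G.bar (G.tailA j k)) = Ψ (G.tailA j (k + 1)) := by
    linear_combination (2 * Ψ (G.tailA j (k + 1)) + 2 * Ψ (G.bar (G.tailA j k))) * hs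
  exact h2

/-- the inflow values on the inward tail arcs are invariant
under the time evolution: `Ψ_n = α_j` on every inward arc of tail `j`. -/
theorem inflow_invariant (G : TailedGraph) (p : G.A → ℝ)
    (hp : TailTransition G p)
    (α : Fin G.r → ℂ) (Ψ : ℕ → G.A → ℂ)
    (h0in : ∀ j k, Ψ 0 (G.tailA j k) = α j)
    (h0out : ∀ a : G.A, (∀ j k, a ≠ G.tailA j k) → Ψ 0 a = 0)
    (hstep : ∀ n, Ψ (n + 1) = szegedy G.toSymDigraph p (Ψ n)) :
    ∀ (n : ℕ) (j : Fin G.r) (k : ℕ), Ψ n (G.tailA j k) = α j := by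
  intro n
  induction n with
  | zero => exact h0in
  | succ n ih =>
    intro j k
    rw [hstep n, szegedy_tail G p hp (Ψ n) j k]
    exact ih j (k + 1)
end

section
/- If Ψ : Ã → ℂ satisfies UΨ = Ψ, then for every arc a ∈ Ã one has ρ_E(|a|) = √(p(a))·ρ_V(o(a)) and ρ_E(|a|) = √(p(ā))·ρ_V(t(a)). -/
open scoped BigOperators

/-- for a fixed point `Ψ` of `U`, one has
`ρ_E(|a|) = √(p a) ρ_V(o a)` and `ρ_E(|a|) = √(p ā) ρ_V(t a)`. -/
theorem rhoE_eq_rhoV (G : SymDigraph) (p : G.A → ℝ) (hp : IsTransition G p)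
    (Ψ : G.A → ℂ) (hΨ : szegedy G p Ψ = Ψ) :
    ∀ a : G.A,
      rhoE G Ψ a = (Real.sqrt (p a) : ℂ) * rhoV G p Ψ (G.o a) ∧
      rhoE G Ψ a = (Real.sqrt (p (G.bar a)) : ℂ) * rhoV G p Ψ (G.t a) := by
  intro a
  constructor
  · have h := congrFun hΨ a
    simp only [szegedy] at h
    have : Ψ a + Ψ (G.bar a) = 2 * (Real.sqrt (p a) : ℂ) * rhoV G p Ψ (G.o a) := by
      rw [← h]; unfold rhoV; ring
    unfold rhoE
    rw [this]; ring
  · have h := congrFun hΨ (G.bar a)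
    simp only [szegedy, G.bar_inv a, G.o_bar] at h
    have : Ψ a + Ψ (G.bar a) = 2 * (Real.sqrt (p (G.bar a)) : ℂ) * rhoV G p Ψ (G.t a) := by
      rw [← h]; unfold rhoV; ring
    unfold rhoE
    rw [this]; ring
end

section
/- If Ψ : Ã → ℂ satisfies UΨ = Ψ, then for every arc a ∈ Ã one has p(a)·|ρ_V(o(a))|² = p(ā)·|ρ_V(t(a))|²; that is, the function u ↦ |ρ_V(u)|² satisfies the detailed balance (reversibility) equation of the underlying random walk. -/
open scoped BigOperators

/-- for a fixed point `Ψ` of `U`, the function `u ↦ |ρ_V(u)|²`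
satisfies the detailed balance equation of the underlying random walk. -/
theorem rhoV_detailed_balance (G : SymDigraph) (p : G.A → ℝ)
    (hp : IsTransition G p) (Ψ : G.A → ℂ) (hΨ : szegedy G p Ψ = Ψ) :
    ∀ a : G.A,
      p a * ‖rhoV G p Ψ (G.o a)‖ ^ 2
        = p (G.bar a) * ‖rhoV G p Ψ (G.t a)‖ ^ 2 := by
  intro a
  have key : ∀ b : G.A,
      2 * (Real.sqrt (p b) : ℂ) * rhoV G p Ψ (G.o b) = Ψ b + Ψ (G.bar b) := by
    intro b
    have h := congrFun hΨ b
    unfold szegedy at h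
    unfold rhoV
    linear_combination h
  have h1 := key a
  have h2 := key (G.bar a)
  rw [G.bar_inv a, G.o_bar a] at h2
  have heq : (Real.sqrt (p a) : ℂ) * rhoV G p Ψ (G.o a)
      = (Real.sqrt (p (G.bar a)) : ℂ) * rhoV G p Ψ (G.t a) := by
    linear_combination (h1 - h2) / 2
  have habs := congrArg (‖·‖) heq
  simp only [norm_mul, Complex.norm_real, Real.norm_eq_abs] at habs
  have hp1 : 0 ≤ p a := (hp.1 a).1.le
  have hp2 : 0 ≤ p (G.bar a) := (hp.1 (G.bar a)).1.le
  have := congrArg (· ^ 2) habs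
  simp only [mul_pow, Real.sq_sqrt hp1, Real.sq_sqrt hp2, abs_eq_self.mpr (Real.sqrt_nonneg _)] at this
  simpa using this
end

section
/- Suppose p is reversible. If Ψ : Ã → ℂ satisfies UΨ = Ψ, then there exists a constant c ∈ ℂ such that ρ_V(u) = c·√(m_V(u)) for every vertex u, and consequently Ψ(ā) = 2c·√(m_E(|a|)) − Ψ(a) for every arc a. -/
open scoped BigOperators

/-- if `p` is reversible, then for a fixed point `Ψ` of `U`
there is `c ∈ ℂ` with `ρ_V(u) = c √(m_V u)` for every vertex `u`, and
consequently `Ψ(ā) = 2c √(m_E(|a|)) − Ψ(a)` for every arc `a`. -/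
theorem rhoV_of_reversible (G : SymDigraph) (p : G.A → ℝ)
    (hp : IsTransition G p) (mV : G.V → ℝ) (hrev : IsReversible G p mV)
    (Ψ : G.A → ℂ) (hΨ : szegedy G p Ψ = Ψ) :
    ∃ c : ℂ,
      (∀ u : G.V, rhoV G p Ψ u = c * (Real.sqrt (mV u) : ℂ)) ∧
      ∀ a : G.A,
        Ψ (G.bar a) = 2 * c * (Real.sqrt (mEdge G p mV a) : ℂ) - Ψ a := by
  classical
  -- fixed point at each arc
  have hfix : ∀ a : G.A,
      2 * (Real.sqrt (p a) : ℂ) * rhoV G p Ψ (G.o a) - Ψ (G.bar a) = Ψ a := by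
    intro a
    have := congrFun hΨ a
    simpa [szegedy, rhoV] using this
  have hfix' : ∀ a : G.A,
      2 * (Real.sqrt (p (G.bar a)) : ℂ) * rhoV G p Ψ (G.t a) - Ψ a = Ψ (G.bar a) := by
    intro a
    have := hfix (G.bar a)
    rwa [G.bar_inv a, G.o_bar a] at this
  have key : ∀ a : G.A,
      (Real.sqrt (p a) : ℂ) * rhoV G p Ψ (G.o a)
        = (Real.sqrt (p (G.bar a)) : ℂ) * rhoV G p Ψ (G.t a) := by
    intro a
    linear_combination (hfix a - hfix' a) / 2
  have hbal : ∀ a : G.A,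
      Real.sqrt (p a) * Real.sqrt (mV (G.o a))
        = Real.sqrt (p (G.bar a)) * Real.sqrt (mV (G.t a)) := by
    intro a
    rw [← Real.sqrt_mul (le_of_lt (hp.1 a).1), ← Real.sqrt_mul (le_of_lt (hp.1 (G.bar a)).1),
      hrev.2 a]
  have hmpos : ∀ u, (0:ℝ) < Real.sqrt (mV u) := fun u => Real.sqrt_pos.mpr (hrev.1 u)
  have hmne : ∀ u, ((Real.sqrt (mV u) : ℝ) : ℂ) ≠ 0 := by
    intro u
    exact_mod_cast (hmpos u).ne'
  have step : ∀ a : G.A,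
      rhoV G p Ψ (G.o a) * ((Real.sqrt (mV (G.t a)) : ℝ) : ℂ)
        = rhoV G p Ψ (G.t a) * ((Real.sqrt (mV (G.o a)) : ℝ) : ℂ) := by
    intro a
    have hB : ((Real.sqrt (p (G.bar a)) : ℝ) : ℂ) ≠ 0 := by
      exact_mod_cast (Real.sqrt_pos.mpr (hp.1 (G.bar a)).1).ne'
    have hbalC : ((Real.sqrt (p a) : ℝ) : ℂ) * ((Real.sqrt (mV (G.o a)) : ℝ) : ℂ)
        = ((Real.sqrt (p (G.bar a)) : ℝ) : ℂ) * ((Real.sqrt (mV (G.t a)) : ℝ) : ℂ) := by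
      exact_mod_cast congrArg (fun x : ℝ => (x : ℂ)) (hbal a)
    have h3 : ((Real.sqrt (p (G.bar a)) : ℝ) : ℂ)
          * (rhoV G p Ψ (G.o a) * ((Real.sqrt (mV (G.t a)) : ℝ) : ℂ))
        = ((Real.sqrt (p (G.bar a)) : ℝ) : ℂ)
          * (rhoV G p Ψ (G.t a) * ((Real.sqrt (mV (G.o a)) : ℝ) : ℂ)) := by
      linear_combination ((Real.sqrt (mV (G.o a)) : ℝ) : ℂ) * key a
        - rhoV G p Ψ (G.o a) * hbalC
    exact mul_left_cancel₀ hB h3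
  by_cases hV : Nonempty G.V
  · obtain ⟨u₀⟩ := hV
    -- constancy along the graph
    have const : ∀ u : G.V,
        rhoV G p Ψ u * ((Real.sqrt (mV u₀) : ℝ) : ℂ)
          = rhoV G p Ψ u₀ * ((Real.sqrt (mV u) : ℝ) : ℂ) := by
      intro u
      have hreach := G.connected u₀ u
      induction hreach with
      | refl => rfl
      | @tail v w hvw harc ih =>
        obtain ⟨a, hao, hat⟩ := harc
        have hs := step a
        rw [hao, hat] at hs
        have hc : ((Real.sqrt (mV v) : ℝ) : ℂ) ≠ 0 := hmne v
        apply mul_left_cancel₀ hc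
        calc ((Real.sqrt (mV v) : ℝ) : ℂ) * (rhoV G p Ψ w * ((Real.sqrt (mV u₀) : ℝ) : ℂ))
            = (rhoV G p Ψ w * ((Real.sqrt (mV v) : ℝ) : ℂ)) * ((Real.sqrt (mV u₀) : ℝ) : ℂ) := by
              ring
          _ = (rhoV G p Ψ v * ((Real.sqrt (mV w) : ℝ) : ℂ)) * ((Real.sqrt (mV u₀) : ℝ) : ℂ) := by
              rw [← hs]
          _ = (rhoV G p Ψ v * ((Real.sqrt (mV u₀) : ℝ) : ℂ)) * ((Real.sqrt (mV w) : ℝ) : ℂ) := by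
              ring
          _ = (rhoV G p Ψ u₀ * ((Real.sqrt (mV v) : ℝ) : ℂ)) * ((Real.sqrt (mV w) : ℝ) : ℂ) := by
              rw [ih]
          _ = ((Real.sqrt (mV v) : ℝ) : ℂ) * (rhoV G p Ψ u₀ * ((Real.sqrt (mV w) : ℝ) : ℂ)) := by
              ring
    refine ⟨rhoV G p Ψ u₀ / ((Real.sqrt (mV u₀) : ℝ) : ℂ), ?_, ?_⟩
    · intro u
      rw [div_mul_eq_mul_div, eq_div_iff (hmne u₀)]
      linear_combination const u
    · intro a
      have h1 := hfix a
      have hρ : rhoV G p Ψ (G.o a)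
          = rhoV G p Ψ u₀ / ((Real.sqrt (mV u₀) : ℝ) : ℂ)
            * ((Real.sqrt (mV (G.o a)) : ℝ) : ℂ) := by
        rw [div_mul_eq_mul_div, eq_div_iff (hmne u₀)]
        linear_combination const (G.o a)
      have hedge : Real.sqrt (mEdge G p mV a)
          = Real.sqrt (p a) * Real.sqrt (mV (G.o a)) := by
        rw [mEdge, Real.sqrt_mul (le_of_lt (hp.1 a).1)]
      rw [hedge]
      push_cast
      linear_combination -h1 + 2 * ((Real.sqrt (p a) : ℝ) : ℂ) * hρ
  · refine ⟨0, fun u => absurd ⟨u⟩ hV, fun a => absurd ⟨G.o a⟩ hV⟩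
end

section
/- Suppose p is reversible and Ψ is a stationary state with boundary data α,β ∈ ℂ^r. Then for every vertex u ∈ Ṽ, Σ_{b:t(b)=u} √(p(b̄))·Ψ(b) = √(m_V(u))·⟨m_{δE},α⟩/√(m(δG0)); that is, the constant c with ρ_V(u)=c·√(m_V(u)) equals ⟨m_{δE},α⟩/√(m(δG0)), where ⟨m_{δE},α⟩ = Σ_{j=1}^r √(m_E(|e_j|)/m(δG0))·α_j. -/
open scoped BigOperators

/-- `Ψ` is a stationary state with boundary data `α β : ℂ^r`:
`UΨ = Ψ`, `Ψ = α_j` on the inward arcs of tail `j` and `Ψ = β_j` on the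
outward arcs of tail `j`. -/
def IsStationaryQW (G : TailedGraph) (p : G.A → ℝ) (Ψ : G.A → ℂ)
    (α β : Fin G.r → ℂ) : Prop :=
  szegedy G.toSymDigraph p Ψ = Ψ ∧
  (∀ j k, Ψ (G.tailA j k) = α j) ∧
  ∀ j k, Ψ (G.bar (G.tailA j k)) = β j

section Aux

lemma SymDigraph.in_eq (G : SymDigraph) (u : G.V) :
    {b : G.A | G.t b = u} = G.bar '' {a : G.A | G.o a = u} := by
  ext b
  simp only [Set.mem_setOf_eq, Set.mem_image]
  constructor
  · intro hb
    exact ⟨G.bar b, by rw [G.o_bar, hb], G.bar_inv b⟩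
  · rintro ⟨a, ha, rfl⟩
    rw [G.t_bar]; exact ha

lemma SymDigraph.in_fin (G : SymDigraph) (u : G.V) : {b : G.A | G.t b = u}.Finite := by
  rw [G.in_eq]; exact (G.out_fin u).image _

/-- Incoming sum as a `Finset` sum. -/
noncomputable def rhoF (G : SymDigraph) (p : G.A → ℝ) (Ψ : G.A → ℂ) (u : G.V) : ℂ :=
  ∑ b ∈ (G.in_fin u).toFinset, (Real.sqrt (p (G.bar b)) : ℂ) * Ψ b

lemma rhoF_eq (G : SymDigraph) (p : G.A → ℝ) (Ψ : G.A → ℂ) (u : G.V) :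
    (∑ᶠ b ∈ {b : G.A | G.t b = u}, (Real.sqrt (p (G.bar b)) : ℂ) * Ψ b) = rhoF G p Ψ u :=
  finsum_mem_eq_finite_toFinset_sum _ (G.in_fin u)

lemma SymDigraph.mem_in_fin (G : SymDigraph) (u : G.V) (b : G.A) :
    b ∈ (G.in_fin u).toFinset ↔ G.t b = u := by
  simp [Set.Finite.mem_toFinset]

end Aux

/-- for a reversible walk and a stationary state with boundary
data `α, β`, the constant `c` with `ρ_V(u) = c √(m_V u)` equals
`⟨m_{δE}, α⟩ / √(m(δG0))`. -/
theorem rhoV_constant_value (G : TailedGraph) (p : G.A → ℝ)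
    (hp : TailTransition G p) (mV : G.V → ℝ)
    (hrev : IsReversible G.toSymDigraph p mV)
    (Ψ : G.A → ℂ) (α β : Fin G.r → ℂ) (hΨ : IsStationaryQW G p Ψ α β) :
    ∀ u : G.V,
      (∑ᶠ b ∈ {b : G.A | G.t b = u}, (Real.sqrt (p (G.bar b)) : ℂ) * Ψ b)
        = (Real.sqrt (mV u) : ℂ) * bdryInner G p mV α
            / (Real.sqrt (mDelta G p mV) : ℂ) := by
  classical
  obtain ⟨⟨hp01, hpsum⟩, hpin, hpout⟩ := hp
  obtain ⟨hmV, hdb⟩ := hrev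
  obtain ⟨hU, hal, hbe⟩ := hΨ
  have hppos : ∀ a, 0 < p a := fun a => (hp01 a).1
  set ρ : G.V → ℂ := rhoF G.toSymDigraph p Ψ with hρ
  have hρu : ∀ u : G.V, ρ u = ∑ b ∈ (G.toSymDigraph.in_fin u).toFinset,
      (Real.sqrt (p (G.bar b)) : ℂ) * Ψ b := fun u => rfl
  -- fixed point identity
  have hfix : ∀ a : G.A, Ψ a + Ψ (G.bar a) = 2 * (Real.sqrt (p a) : ℂ) * ρ (G.o a) := by
    intro a
    have h := congrFun hU a
    simp only [szegedy] at h
    rw [rhoF_eq G.toSymDigraph p Ψ (G.o a)] at h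
    linear_combination -h
  -- one-step ratio identity
  have hstep : ∀ a : G.A, ρ (G.o a) * (Real.sqrt (mV (G.t a)) : ℂ)
      = ρ (G.t a) * (Real.sqrt (mV (G.o a)) : ℂ) := by
    intro a
    have h1 := hfix a
    have h2 := hfix (G.bar a)
    rw [G.bar_inv a, G.o_bar] at h2
    have hE : (Real.sqrt (p a) : ℂ) * ρ (G.o a)
        = (Real.sqrt (p (G.bar a)) : ℂ) * ρ (G.t a) := by
      linear_combination (h2 - h1) / 2
    have hs : Real.sqrt (p a) * Real.sqrt (mV (G.o a))
        = Real.sqrt (p (G.bar a)) * Real.sqrt (mV (G.t a)) := by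
      rw [← Real.sqrt_mul (hppos a).le, ← Real.sqrt_mul (hppos (G.bar a)).le, hdb a]
    have hsne : (Real.sqrt (p a) * Real.sqrt (mV (G.o a))) ≠ 0 :=
      (mul_pos (Real.sqrt_pos.mpr (hppos a)) (Real.sqrt_pos.mpr (hmV _))).ne'
    have h4 : ((Real.sqrt (p a) * Real.sqrt (mV (G.o a)) : ℝ) : ℂ)
          * (ρ (G.o a) * (Real.sqrt (mV (G.t a)) : ℂ))
        = ((Real.sqrt (p a) * Real.sqrt (mV (G.o a)) : ℝ) : ℂ)
          * (ρ (G.t a) * (Real.sqrt (mV (G.o a)) : ℂ)) := by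
      conv_rhs => rw [hs]
      push_cast
      linear_combination ((Real.sqrt (mV (G.o a)) : ℂ)
        * (Real.sqrt (mV (G.t a)) : ℂ)) * hE
    exact mul_left_cancel₀ (by exact_mod_cast hsne) h4
  have hsqrtne : ∀ u : G.V, ((Real.sqrt (mV u) : ℝ) : ℂ) ≠ 0 := fun u => by
    exact_mod_cast (Real.sqrt_pos.mpr (hmV u)).ne'
  -- constancy along the graph
  have hconn : ∀ u v : G.V, ρ u * (Real.sqrt (mV v) : ℂ) = ρ v * (Real.sqrt (mV u) : ℂ) := by
    intro u v
    induction G.connected u v with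
    | refl => rfl
    | @tail b w hub hbw ih =>
      obtain ⟨a, hao, hat⟩ := hbw
      have hst := hstep a
      rw [hao, hat] at hst
      refine mul_left_cancel₀ (hsqrtne b) ?_
      linear_combination (Real.sqrt (mV w) : ℂ) * ih + (Real.sqrt (mV u) : ℂ) * hst
  set u₀ : G.V := G.tailV ⟨0, G.r_pos⟩ 0 with hu₀
  set c : ℂ := ρ u₀ / (Real.sqrt (mV u₀) : ℂ) with hc
  have hρc : ∀ u : G.V, ρ u = c * (Real.sqrt (mV u) : ℂ) := by
    intro u
    rw [hc, div_mul_eq_mul_div, eq_div_iff (hsqrtne u₀)]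
    linear_combination hconn u u₀
  -- basic facts about the edge measure
  have hmEpos : ∀ a, 0 < mEdge G.toSymDigraph p mV a := fun a => mul_pos (hppos a) (hmV _)
  have hmEbar : ∀ a, mEdge G.toSymDigraph p mV (G.bar a) = mEdge G.toSymDigraph p mV a := by
    intro a
    simp only [mEdge, G.o_bar]
    exact (hdb a).symm
  have hpsi2 : ∀ a : G.A, Ψ a + Ψ (G.bar a)
      = 2 * c * (Real.sqrt (mEdge G.toSymDigraph p mV a) : ℂ) := by
    intro a
    rw [hfix a, hρc (G.o a)]
    have : Real.sqrt (mEdge G.toSymDigraph p mV a) = Real.sqrt (p a) * Real.sqrt (mV (G.o a)) := by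
      rw [show mEdge G.toSymDigraph p mV a = p a * mV (G.o a) from rfl,
        Real.sqrt_mul (hppos a).le]
    rw [this]
    push_cast
    ring
  -- the current
  set d : G.A → ℂ := fun a => (Real.sqrt (mEdge G.toSymDigraph p mV a) : ℂ) * Ψ a
      - c * ((mEdge G.toSymDigraph p mV a : ℝ) : ℂ) with hd
  have hdu : ∀ a, d a = (Real.sqrt (mEdge G.toSymDigraph p mV a) : ℂ) * Ψ a
      - c * ((mEdge G.toSymDigraph p mV a : ℝ) : ℂ) := fun a => rfl
  have hsqC : ∀ a, ((Real.sqrt (mEdge G.toSymDigraph p mV a)) : ℂ) * ((Real.sqrt (mEdge G.toSymDigraph p mV a)) : ℂ)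
      = ((mEdge G.toSymDigraph p mV a : ℝ) : ℂ) := by
    intro a
    exact_mod_cast congrArg Complex.ofReal (Real.mul_self_sqrt (hmEpos a).le)
  have hdbar : ∀ a, d a + d (G.bar a) = 0 := by
    intro a
    rw [hdu, hdu, hmEbar a]
    linear_combination (Real.sqrt (mEdge G.toSymDigraph p mV a) : ℂ) * hpsi2 a + 2 * c * hsqC a
  -- Kirchhoff's law at every vertex
  have hmEin : ∀ u : G.V, ∀ b ∈ (G.toSymDigraph.in_fin u).toFinset,
      mEdge G.toSymDigraph p mV b = p (G.bar b) * mV u := by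
    intro u b hb
    rw [G.toSymDigraph.mem_in_fin] at hb
    rw [show mEdge G.toSymDigraph p mV b = p b * mV (G.o b) from rfl, hdb b, hb]
  have hInImage : ∀ u : G.V, (G.toSymDigraph.in_fin u).toFinset
      = ((G.toSymDigraph.out_fin u).toFinset).image G.bar := by
    intro u
    ext b
    simp only [G.toSymDigraph.mem_in_fin, Finset.mem_image, Set.Finite.mem_toFinset, Set.mem_setOf_eq]
    constructor
    · intro hb
      exact ⟨G.bar b, by rw [G.o_bar]; exact hb, G.bar_inv b⟩
    · rintro ⟨a, ha, rfl⟩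
      rw [G.t_bar]; exact ha
  have houtsum : ∀ u : G.V, ∑ a ∈ (G.toSymDigraph.out_fin u).toFinset, p a = 1 := by
    intro u
    have h := hpsum u
    rwa [finsum_mem_eq_finite_toFinset_sum _ (G.toSymDigraph.out_fin u)] at h
  have hmass : ∀ u : G.V, ∑ b ∈ (G.toSymDigraph.in_fin u).toFinset, mEdge G.toSymDigraph p mV b = mV u := by
    intro u
    rw [Finset.sum_congr rfl (hmEin u), hInImage u,
      Finset.sum_image (fun a _ b _ h => G.bar_inv.injective h)]
    have hbb : ∀ a ∈ (G.toSymDigraph.out_fin u).toFinset,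
        p (G.bar (G.bar a)) * mV u = p a * mV u := by
      intro a _
      rw [G.bar_inv a]
    rw [Finset.sum_congr rfl hbb, ← Finset.sum_mul, houtsum u, one_mul]
  have hflow : ∀ u : G.V, ∑ b ∈ (G.toSymDigraph.in_fin u).toFinset, d b = 0 := by
    intro u
    have h1 : ∑ b ∈ (G.toSymDigraph.in_fin u).toFinset, (Real.sqrt (mEdge G.toSymDigraph p mV b) : ℂ) * Ψ b
        = (Real.sqrt (mV u) : ℂ) * ρ u := by
      rw [hρu u, Finset.mul_sum]
      refine Finset.sum_congr rfl ?_
      intro b hb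
      rw [show Real.sqrt (mEdge G.toSymDigraph p mV b) = Real.sqrt (p (G.bar b)) * Real.sqrt (mV u) by
        rw [hmEin u b hb, Real.sqrt_mul (hppos (G.bar b)).le, mul_comm]]
      push_cast
      ring
    have h2 : ∑ b ∈ (G.toSymDigraph.in_fin u).toFinset, ((mEdge G.toSymDigraph p mV b : ℝ) : ℂ)
        = ((mV u : ℝ) : ℂ) := by
      exact_mod_cast congrArg Complex.ofReal (hmass u)
    have hsqV : ((Real.sqrt (mV u)) : ℂ) * ((Real.sqrt (mV u)) : ℂ) = ((mV u : ℝ) : ℂ) := by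
      exact_mod_cast congrArg Complex.ofReal (Real.mul_self_sqrt (hmV u).le)
    calc ∑ b ∈ (G.toSymDigraph.in_fin u).toFinset, d b
        = (∑ b ∈ (G.toSymDigraph.in_fin u).toFinset, (Real.sqrt (mEdge G.toSymDigraph p mV b) : ℂ) * Ψ b)
          - c * ∑ b ∈ (G.toSymDigraph.in_fin u).toFinset, ((mEdge G.toSymDigraph p mV b : ℝ) : ℂ) := by
          rw [Finset.mul_sum, ← Finset.sum_sub_distrib]
      _ = 0 := by
          rw [h1, h2, hρc u]
          linear_combination c * hsqV
  -- global conservation over V0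
  have hpd : (↑(G.V0_fin.toFinset) : Set G.V).PairwiseDisjoint
      (fun u => (G.toSymDigraph.in_fin u).toFinset) := by
    intro u _ v _ huv
    simp only [Function.onFun]
    refine Finset.disjoint_left.mpr ?_
    intro b hbu hbv
    rw [G.toSymDigraph.mem_in_fin] at hbu hbv
    exact huv (hbu.symm.trans hbv)
  have hinV0 : ∀ a : G.A, G.t a ∈ G.V0 ↔ (a ∈ G.A0 ∨ ∃ j, a = G.tailA j 0) := by
    intro a
    constructor
    · intro ha
      rcases G.arcs_cover a with h0 | ⟨j, k, h | h⟩
      · exact Or.inl h0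
      · cases k with
        | zero => exact Or.inr ⟨j, h⟩
        | succ k =>
          exfalso
          rw [h, G.tailA_t] at ha
          exact G.tailV_notin j k ha
      · exfalso
        rw [h, G.t_bar, G.tailA_o] at ha
        exact G.tailV_notin j k ha
    · rintro (h0 | ⟨j, rfl⟩)
      · exact (G.A0_ends a h0).2
      · rw [G.tailA_t]; exact G.tailV_root j
  have hBU : (G.V0_fin.toFinset).biUnion (fun u => (G.toSymDigraph.in_fin u).toFinset)
      = G.A0_fin.toFinset ∪ Finset.image (fun j : Fin G.r => G.tailA j 0) Finset.univ := by
    ext a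
    simp only [Finset.mem_biUnion, Finset.mem_union, Finset.mem_image, Finset.mem_univ,
      true_and, Set.Finite.mem_toFinset, G.toSymDigraph.mem_in_fin]
    constructor
    · rintro ⟨u, hu, ht⟩
      rcases (hinV0 a).mp (ht ▸ hu) with h | ⟨j, hj⟩
      · exact Or.inl h
      · exact Or.inr ⟨j, hj.symm⟩
    · intro h
      refine ⟨G.t a, (hinV0 a).mpr ?_, rfl⟩
      rcases h with h | ⟨j, hj⟩
      · exact Or.inl h
      · exact Or.inr ⟨j, hj.symm⟩
  have hdisjAE : Disjoint (G.A0_fin.toFinset)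
      (Finset.image (fun j : Fin G.r => G.tailA j 0) Finset.univ) := by
    refine Finset.disjoint_left.mpr ?_
    intro a ha hE
    simp only [Finset.mem_image, Finset.mem_univ, true_and] at hE
    obtain ⟨j, rfl⟩ := hE
    exact G.tailA_nin j 0 (by simpa using ha)
  have hA0sum : ∑ a ∈ G.A0_fin.toFinset, d a = 0 := by
    refine Finset.sum_involution (fun a _ => G.bar a) (fun a _ => hdbar a) ?_ ?_ ?_
    · intro a ha hfa h
      apply hfa
      replace h : G.bar a = a := h
      have h2 := hdbar a
      rw [h] at h2
      exact add_self_eq_zero.mp h2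
    · intro a ha
      simp only [Set.Finite.mem_toFinset] at ha ⊢
      exact G.A0_bar a ha
    · intro a ha
      exact G.bar_inv a
  have htail_inj : ∀ j j' : Fin G.r, G.tailA j 0 = G.tailA j' 0 → j = j' := by
    intro j j' h
    have h2 := congrArg G.o h
    rw [G.tailA_o, G.tailA_o] at h2
    exact (G.tailV_inj j 0 j' 0 h2).1
  have hglobal : ∑ j : Fin G.r, d (G.tailA j 0) = 0 := by
    have h0 : ∑ u ∈ G.V0_fin.toFinset, ∑ b ∈ (G.toSymDigraph.in_fin u).toFinset, d b = 0 :=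
      Finset.sum_eq_zero (fun u _ => hflow u)
    rw [← Finset.sum_biUnion hpd, hBU, Finset.sum_union hdisjAE, hA0sum, zero_add,
      Finset.sum_image (fun j _ j' _ h => htail_inj j j' h)] at h0
    exact h0
  -- extract the value of c
  have hδC : ∑ j : Fin G.r, ((mEdge G.toSymDigraph p mV (G.tailA j 0) : ℝ) : ℂ)
      = ((mDelta G p mV : ℝ) : ℂ) := by
    rw [show mDelta G p mV = ∑ j : Fin G.r, mEdge G.toSymDigraph p mV (G.tailA j 0) from rfl]
    push_cast
    rfl
  have hkey : ∑ j : Fin G.r, (Real.sqrt (mEdge G.toSymDigraph p mV (G.tailA j 0)) : ℂ) * α j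
      = c * ((mDelta G p mV : ℝ) : ℂ) := by
    have h1 : ∀ j : Fin G.r, d (G.tailA j 0)
        = (Real.sqrt (mEdge G.toSymDigraph p mV (G.tailA j 0)) : ℂ) * α j
          - c * ((mEdge G.toSymDigraph p mV (G.tailA j 0) : ℝ) : ℂ) := by
      intro j
      rw [hdu, hal j 0]
    rw [Finset.sum_congr rfl (fun j _ => h1 j), Finset.sum_sub_distrib,
      ← Finset.mul_sum, hδC, sub_eq_zero] at hglobal
    exact hglobal
  have hδpos : 0 < mDelta G p mV := by
    have : Nonempty (Fin G.r) := ⟨⟨0, G.r_pos⟩⟩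
    exact Finset.sum_pos (fun j _ => hmEpos _) Finset.univ_nonempty
  have hδne : ((Real.sqrt (mDelta G p mV)) : ℂ) ≠ 0 := by
    exact_mod_cast (Real.sqrt_pos.mpr hδpos).ne'
  have hδsq : ((Real.sqrt (mDelta G p mV)) : ℂ) * ((Real.sqrt (mDelta G p mV)) : ℂ)
      = ((mDelta G p mV : ℝ) : ℂ) := by
    exact_mod_cast congrArg Complex.ofReal (Real.mul_self_sqrt hδpos.le)
  have hbd : bdryInner G p mV α = c * (Real.sqrt (mDelta G p mV) : ℂ) := by
    rw [show bdryInner G p mV α = ∑ j : Fin G.r,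
        (Real.sqrt (mEdge G.toSymDigraph p mV (G.tailA j 0) / mDelta G p mV) : ℂ) * α j from rfl]
    have hterm : ∀ j : Fin G.r,
        (Real.sqrt (mEdge G.toSymDigraph p mV (G.tailA j 0) / mDelta G p mV) : ℂ) * α j
        = (Real.sqrt (mEdge G.toSymDigraph p mV (G.tailA j 0)) : ℂ) * α j
          / (Real.sqrt (mDelta G p mV) : ℂ) := by
      intro j
      rw [Real.sqrt_div (hmEpos _).le]
      push_cast
      ring
    rw [Finset.sum_congr rfl (fun j _ => hterm j), ← Finset.sum_div, hkey,
      div_eq_iff hδne]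
    linear_combination -c * hδsq
  intro u
  rw [rhoF_eq G.toSymDigraph p Ψ u]
  rw [show rhoF G.toSymDigraph p Ψ u = ρ u from rfl, hρc u, hbd]
  field_simp
end

section
/- (Kirchhoff's current law.) Suppose p is reversible and Ψ is a stationary state with boundary data α,β ∈ ℂ^r. Then the current j satisfies: Σ_{a:t(a)=u} j(a) = 0 and Σ_{a:o(a)=u} j(a) = 0 for every vertex u ∈ Ṽ, and j(a) + j(ā) = 0 for every arc a ∈ Ã. -/
open scoped BigOperators

/-! ### Auxiliary development for Kirchhoff's current law -/

section KirchhoffAux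

open Finset
open scoped Classical

lemma SymDigraph.in_fin_s9 (S : SymDigraph) (u : S.V) : {a : S.A | S.t a = u}.Finite := by
  have h : {a : S.A | S.t a = u} = S.bar '' {a : S.A | S.o a = u} := by
    ext a
    constructor
    · intro ha
      exact ⟨S.bar a, by simp only [Set.mem_setOf_eq, S.o_bar]; exact ha, S.bar_inv a⟩
    · rintro ⟨b, hb, rfl⟩
      simp only [Set.mem_setOf_eq, S.t_bar]
      exact hb
  rw [h]
  exact (S.out_fin u).image _

noncomputable def outF (S : SymDigraph) (u : S.V) : Finset S.A := (S.out_fin u).toFinset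

noncomputable def inF (S : SymDigraph) (u : S.V) : Finset S.A := (S.in_fin_s9 u).toFinset

lemma mem_outF {S : SymDigraph} {u : S.V} {a : S.A} : a ∈ outF S u ↔ S.o a = u := by
  rw [outF, Set.Finite.mem_toFinset]; rfl

lemma mem_inF {S : SymDigraph} {u : S.V} {a : S.A} : a ∈ inF S u ↔ S.t a = u := by
  rw [inF, Set.Finite.mem_toFinset]; rfl

lemma finsum_out {M : Type*} [AddCommMonoid M] (S : SymDigraph) (f : S.A → M) (u : S.V) :
    ∑ᶠ a ∈ {a : S.A | S.o a = u}, f a = ∑ a ∈ outF S u, f a :=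
  finsum_mem_eq_finite_toFinset_sum f (S.out_fin u)

lemma finsum_in {M : Type*} [AddCommMonoid M] (S : SymDigraph) (f : S.A → M) (u : S.V) :
    ∑ᶠ a ∈ {a : S.A | S.t a = u}, f a = ∑ a ∈ inF S u, f a :=
  finsum_mem_eq_finite_toFinset_sum f (S.in_fin_s9 u)

lemma inF_image (S : SymDigraph) (u : S.V) : inF S u = (outF S u).image S.bar := by
  ext a
  simp only [mem_inF, Finset.mem_image, mem_outF]
  constructor
  · intro ha
    exact ⟨S.bar a, by rw [S.o_bar]; exact ha, S.bar_inv a⟩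
  · rintro ⟨b, hb, rfl⟩
    rw [S.t_bar]; exact hb

lemma sum_inF {M : Type*} [AddCommMonoid M] (S : SymDigraph) (u : S.V) (f : S.A → M) :
    ∑ a ∈ inF S u, f a = ∑ a ∈ outF S u, f (S.bar a) := by
  rw [inF_image]
  exact Finset.sum_image (fun x _ y _ h => S.bar_inv.injective h)

lemma sum_p_out {S : SymDigraph} {p : S.A → ℝ} (hp : IsTransition S p) (u : S.V) :
    ∑ a ∈ outF S u, p a = 1 := by
  rw [← finsum_out]; exact hp.2 u

end KirchhoffAux

section KirchhoffMain

open Finset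
open scoped Classical

variable (G : TailedGraph) (p : G.A → ℝ) (mV : G.V → ℝ) (Ψ : G.A → ℂ)

/-- `g u = ρ_V(u)/√(m_V u)`. -/
noncomputable def gfun (u : G.V) : ℂ :=
  rhoV G.toSymDigraph p Ψ u / ((Real.sqrt (mV u) : ℝ) : ℂ)

/-- abbreviation for the edge measure on the tailed graph -/
noncomputable def mE (a : G.A) : ℝ := mEdge G.toSymDigraph p mV a

lemma rhoV_eq (u : G.V) :
    rhoV G.toSymDigraph p Ψ u
      = ∑ b ∈ inF G.toSymDigraph u, (Real.sqrt (p (G.bar b)) : ℂ) * Ψ b :=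
  finsum_in G.toSymDigraph _ u

lemma rhoV_eq_out (u : G.V) :
    rhoV G.toSymDigraph p Ψ u
      = ∑ a ∈ outF G.toSymDigraph u, (Real.sqrt (p a) : ℂ) * Ψ (G.bar a) := by
  rw [rhoV_eq, sum_inF]
  refine Finset.sum_congr rfl fun a _ => ?_
  rw [G.bar_inv a]

variable {G p mV Ψ}

lemma pair_eq (hst : szegedy G.toSymDigraph p Ψ = Ψ) (a : G.A) :
    Ψ a + Ψ (G.bar a)
      = 2 * (Real.sqrt (p a) : ℂ) * rhoV G.toSymDigraph p Ψ (G.o a) := by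
  have h := congrFun hst a
  simp only [szegedy] at h
  rw [rhoV]
  linear_combination -h

lemma sigma_eq (hp : IsTransition G.toSymDigraph p)
    (hst : szegedy G.toSymDigraph p Ψ = Ψ) (u : G.V) :
    ∑ a ∈ outF G.toSymDigraph u, (Real.sqrt (p a) : ℂ) * Ψ a
      = rhoV G.toSymDigraph p Ψ u := by
  have h1 : ∀ a ∈ outF G.toSymDigraph u,
      (Real.sqrt (p a) : ℂ) * Ψ a
        = (p a : ℂ) * (2 * rhoV G.toSymDigraph p Ψ u)
            - (Real.sqrt (p a) : ℂ) * Ψ (G.bar a) := by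
    intro a ha
    have ho : G.o a = u := mem_outF.mp ha
    have hpair := pair_eq hst a
    rw [ho] at hpair
    have hs : (Real.sqrt (p a) : ℂ) * (Real.sqrt (p a) : ℂ) = (p a : ℂ) := by
      rw [← Complex.ofReal_mul, Real.mul_self_sqrt (hp.1 a).1.le]
    linear_combination (Real.sqrt (p a) : ℂ) * hpair
      + 2 * rhoV G.toSymDigraph p Ψ u * hs
  rw [Finset.sum_congr rfl h1, Finset.sum_sub_distrib, ← Finset.sum_mul,
    ← rhoV_eq_out]
  have hps : (∑ a ∈ outF G.toSymDigraph u, (p a : ℂ)) = 1 := by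
    rw [← Complex.ofReal_sum, sum_p_out hp u, Complex.ofReal_one]
  rw [hps]
  ring

lemma mE_bar (hrev : IsReversible G.toSymDigraph p mV) (a : G.A) :
    mE G p mV (G.bar a) = mE G p mV a := by
  show p (G.bar a) * mV (G.o (G.bar a)) = p a * mV (G.o a)
  rw [G.o_bar]
  exact (hrev.2 a).symm

lemma mE_pos (hp : IsTransition G.toSymDigraph p)
    (hrev : IsReversible G.toSymDigraph p mV) (a : G.A) : 0 < mE G p mV a :=
  mul_pos (hp.1 a).1 (hrev.1 _)

lemma sqrt_mE (hp : IsTransition G.toSymDigraph p) (a : G.A) :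
    Real.sqrt (mE G p mV a) = Real.sqrt (p a) * Real.sqrt (mV (G.o a)) :=
  Real.sqrt_mul (hp.1 a).1.le _

lemma sqrt_mE_in (hp : IsTransition G.toSymDigraph p)
    (hrev : IsReversible G.toSymDigraph p mV) (a : G.A) :
    Real.sqrt (mE G p mV a) = Real.sqrt (p (G.bar a)) * Real.sqrt (mV (G.t a)) := by
  have : mE G p mV a = p (G.bar a) * mV (G.t a) := hrev.2 a
  rw [this, Real.sqrt_mul (hp.1 (G.bar a)).1.le]

lemma mEdge_pos (hp : IsTransition G.toSymDigraph p)
    (hrev : IsReversible G.toSymDigraph p mV) (a : G.A) :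
    0 < mEdge G.toSymDigraph p mV a := mE_pos hp hrev a

lemma sqrt_mEdge (hp : IsTransition G.toSymDigraph p) (a : G.A) :
    Real.sqrt (mEdge G.toSymDigraph p mV a)
      = Real.sqrt (p a) * Real.sqrt (mV (G.o a)) := sqrt_mE hp a

lemma flux_in (hp : IsTransition G.toSymDigraph p)
    (hrev : IsReversible G.toSymDigraph p mV) (u : G.V) :
    ∑ a ∈ inF G.toSymDigraph u, (Real.sqrt (mE G p mV a) : ℂ) * Ψ a
      = (Real.sqrt (mV u) : ℂ) * rhoV G.toSymDigraph p Ψ u := by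
  rw [rhoV_eq, Finset.mul_sum]
  refine Finset.sum_congr rfl fun a ha => ?_
  have ht : G.t a = u := mem_inF.mp ha
  rw [sqrt_mE_in hp hrev, ht, Complex.ofReal_mul]
  ring

lemma flux_out (hp : IsTransition G.toSymDigraph p)
    (hrev : IsReversible G.toSymDigraph p mV)
    (hst : szegedy G.toSymDigraph p Ψ = Ψ) (u : G.V) :
    ∑ a ∈ outF G.toSymDigraph u, (Real.sqrt (mE G p mV a) : ℂ) * Ψ a
      = (Real.sqrt (mV u) : ℂ) * rhoV G.toSymDigraph p Ψ u := by
  rw [← sigma_eq hp hst u, Finset.mul_sum]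
  refine Finset.sum_congr rfl fun a ha => ?_
  have ho : G.o a = u := mem_outF.mp ha
  rw [sqrt_mE hp, ho, Complex.ofReal_mul]
  ring

lemma mass_out (hp : IsTransition G.toSymDigraph p) (u : G.V) :
    ∑ a ∈ outF G.toSymDigraph u, mE G p mV a = mV u := by
  have h : ∀ a ∈ outF G.toSymDigraph u, mE G p mV a = p a * mV u := by
    intro a ha
    show p a * mV (G.o a) = p a * mV u
    rw [mem_outF.mp ha]
  rw [Finset.sum_congr rfl h, ← Finset.sum_mul, sum_p_out hp u, one_mul]

lemma mass_in (hp : IsTransition G.toSymDigraph p)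
    (hrev : IsReversible G.toSymDigraph p mV) (u : G.V) :
    ∑ a ∈ inF G.toSymDigraph u, mE G p mV a = mV u := by
  rw [sum_inF]
  have h : ∀ a ∈ outF G.toSymDigraph u, mE G p mV (G.bar a) = mE G p mV a :=
    fun a _ => mE_bar hrev a
  rw [Finset.sum_congr rfl h, mass_out hp u]

lemma sqrt_mV_ne (hrev : IsReversible G.toSymDigraph p mV) (u : G.V) :
    ((Real.sqrt (mV u) : ℝ) : ℂ) ≠ 0 := by
  simp only [ne_eq, Complex.ofReal_eq_zero]
  exact (Real.sqrt_pos.mpr (hrev.1 u)).ne'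

lemma rhoV_eq_g (hrev : IsReversible G.toSymDigraph p mV) (u : G.V) :
    rhoV G.toSymDigraph p Ψ u = (Real.sqrt (mV u) : ℂ) * gfun G p mV Ψ u := by
  rw [gfun, mul_div_cancel₀ _ (sqrt_mV_ne hrev u)]

lemma g_harm (hp : IsTransition G.toSymDigraph p)
    (hrev : IsReversible G.toSymDigraph p mV)
    (hst : szegedy G.toSymDigraph p Ψ = Ψ) (u : G.V) :
    gfun G p mV Ψ u
      = ∑ a ∈ outF G.toSymDigraph u, (p a : ℂ) * gfun G p mV Ψ (G.t a) := by
  have step1 : 2 * rhoV G.toSymDigraph p Ψ u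
      = 2 * ∑ a ∈ outF G.toSymDigraph u,
          (Real.sqrt (p a) : ℂ) * (Real.sqrt (p (G.bar a)) : ℂ)
            * rhoV G.toSymDigraph p Ψ (G.t a) := by
    have h1 : ∀ b ∈ inF G.toSymDigraph u,
        (Real.sqrt (p (G.bar b)) : ℂ) * Ψ b
          = 2 * ((Real.sqrt (p (G.bar b)) : ℂ) * (Real.sqrt (p b) : ℂ)
              * rhoV G.toSymDigraph p Ψ (G.o b))
            - (Real.sqrt (p (G.bar b)) : ℂ) * Ψ (G.bar b) := by
      intro b _
      have hpair := pair_eq hst b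
      linear_combination (Real.sqrt (p (G.bar b)) : ℂ) * hpair
    have h2 : ∑ b ∈ inF G.toSymDigraph u,
        (Real.sqrt (p (G.bar b)) : ℂ) * Ψ (G.bar b)
          = rhoV G.toSymDigraph p Ψ u := by
      rw [sum_inF, ← sigma_eq hp hst u]
      refine Finset.sum_congr rfl fun a _ => ?_
      rw [G.bar_inv a]
    have h3 : ∑ b ∈ inF G.toSymDigraph u,
        (Real.sqrt (p (G.bar b)) : ℂ) * (Real.sqrt (p b) : ℂ)
          * rhoV G.toSymDigraph p Ψ (G.o b)
        = ∑ a ∈ outF G.toSymDigraph u,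
            (Real.sqrt (p a) : ℂ) * (Real.sqrt (p (G.bar a)) : ℂ)
              * rhoV G.toSymDigraph p Ψ (G.t a) := by
      rw [sum_inF]
      refine Finset.sum_congr rfl fun a _ => ?_
      rw [G.bar_inv a, G.o_bar]
    have h4 := rhoV_eq G p Ψ u
    rw [Finset.sum_congr rfl h1, Finset.sum_sub_distrib, h2, ← Finset.mul_sum,
      h3] at h4
    linear_combination h4
  have step2 : ∀ a ∈ outF G.toSymDigraph u,
      (Real.sqrt (p a) : ℂ) * (Real.sqrt (p (G.bar a)) : ℂ)
          * rhoV G.toSymDigraph p Ψ (G.t a)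
        = (Real.sqrt (mV u) : ℂ) * ((p a : ℂ) * gfun G p mV Ψ (G.t a)) := by
    intro a ha
    have ho : G.o a = u := mem_outF.mp ha
    have hr : Real.sqrt (p a) * Real.sqrt (p (G.bar a)) * Real.sqrt (mV (G.t a))
        = p a * Real.sqrt (mV u) := by
      have hb : p (G.bar a) * mV (G.t a) = p a * mV u := by
        rw [← hrev.2 a, ho]
      rw [mul_assoc, ← Real.sqrt_mul (hp.1 (G.bar a)).1.le, hb,
        ← Real.sqrt_mul (hp.1 a).1.le, ← mul_assoc,
        Real.sqrt_mul (mul_self_nonneg (p a)) (mV u),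
        Real.sqrt_mul_self (hp.1 a).1.le]
    rw [rhoV_eq_g hrev]
    calc (Real.sqrt (p a) : ℂ) * (Real.sqrt (p (G.bar a)) : ℂ)
          * ((Real.sqrt (mV (G.t a)) : ℂ) * gfun G p mV Ψ (G.t a))
        = ((Real.sqrt (p a) * Real.sqrt (p (G.bar a)) * Real.sqrt (mV (G.t a)) : ℝ) : ℂ)
            * gfun G p mV Ψ (G.t a) := by push_cast; ring
      _ = ((p a * Real.sqrt (mV u) : ℝ) : ℂ) * gfun G p mV Ψ (G.t a) := by rw [hr]
      _ = (Real.sqrt (mV u) : ℂ) * ((p a : ℂ) * gfun G p mV Ψ (G.t a)) := by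
          push_cast; ring
  rw [Finset.sum_congr rfl step2, ← Finset.mul_sum] at step1
  rw [rhoV_eq_g hrev] at step1
  refine mul_left_cancel₀ (sqrt_mV_ne hrev u) ?_
  linear_combination step1 / 2

lemma out_tail (j : Fin G.r) (k : ℕ) :
    outF G.toSymDigraph (G.tailV j (k + 1))
      = {G.tailA j k, G.bar (G.tailA j (k + 1))} := by
  ext a
  simp only [mem_outF, Finset.mem_insert, Finset.mem_singleton]
  constructor
  · intro ha
    rcases G.arcs_cover a with h0 | ⟨j', k', h | h⟩
    · exact absurd (ha ▸ (G.A0_ends a h0).1) (G.tailV_notin j k)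
    · subst h
      rw [G.tailA_o] at ha
      obtain ⟨rfl, rfl⟩ := G.tailV_inj _ _ _ _ ha
      left; rfl
    · subst h
      rw [G.o_bar, G.tailA_t] at ha
      cases k' with
      | zero => exact absurd (ha ▸ G.tailV_root j') (G.tailV_notin j k)
      | succ n =>
          obtain ⟨rfl, rfl⟩ := G.tailV_inj _ _ _ _ ha
          right; rfl
  · rintro (rfl | rfl)
    · exact G.tailA_o j k
    · rw [G.o_bar, G.tailA_t]

lemma tailA_ne (hp : TailTransition G p) (j : Fin G.r) (k : ℕ) :
    G.tailA j k ≠ G.bar (G.tailA j (k + 1)) := by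
  intro h
  have hs := sum_p_out hp.1 (G.tailV j (k + 1))
  rw [out_tail, ← h] at hs
  simp only [Finset.insert_eq_self.mpr (Finset.mem_singleton_self _),
    Finset.sum_singleton] at hs
  rw [hp.2.1 j k] at hs
  norm_num at hs

lemma mV_tail (hp : TailTransition G p) (hrev : IsReversible G.toSymDigraph p mV)
    (j : Fin G.r) (k : ℕ) : mV (G.tailV j (k + 1)) = mV (G.tailV j 1) := by
  induction k with
  | zero => rfl
  | succ n ih =>
      have hb := hrev.2 (G.tailA j (n + 1))
      rw [G.tailA_o, G.tailA_t, hp.2.1, hp.2.2] at hb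
      have h2 : mV (G.tailV j (n + 1 + 1)) = mV (G.tailV j (n + 1)) := by linarith
      rw [h2, ih]

lemma rhoV_tail (hp : TailTransition G p) {α β : Fin G.r → ℂ}
    (hΨ : IsStationaryState G p Ψ α β) (j : Fin G.r) (k : ℕ) :
    rhoV G.toSymDigraph p Ψ (G.tailV j (k + 1))
      = (Real.sqrt (1 / 2) : ℂ) * (α j + β j) := by
  rw [rhoV_eq, sum_inF, out_tail,
    Finset.sum_pair (tailA_ne hp j k)]
  rw [G.bar_inv, G.bar_inv, hp.2.1 j k, hp.2.2 j k, hΨ.2.2 j k,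
    G.bar_inv (G.tailA j (k + 1)), hΨ.2.1 j (k + 1)]
  ring

lemma g_tail (hp : TailTransition G p) (hrev : IsReversible G.toSymDigraph p mV)
    {α β : Fin G.r → ℂ} (hΨ : IsStationaryState G p Ψ α β) (j : Fin G.r) (k : ℕ) :
    gfun G p mV Ψ (G.tailV j (k + 1)) = gfun G p mV Ψ (G.tailV j 1) := by
  rw [gfun, gfun, rhoV_tail hp hΨ j k, rhoV_tail hp hΨ j 0, mV_tail hp hrev j k]

lemma g_root (hp : TailTransition G p) (hrev : IsReversible G.toSymDigraph p mV)
    {α β : Fin G.r → ℂ} (hΨ : IsStationaryState G p Ψ α β) (j : Fin G.r) :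
    gfun G p mV Ψ (G.tailV j 0) = gfun G p mV Ψ (G.tailV j 1) := by
  have hh := g_harm hp.1 hrev hΨ.1 (G.tailV j (0 + 1))
  rw [out_tail j 0, Finset.sum_pair (tailA_ne hp j 0), G.tailA_t, G.t_bar,
    G.tailA_o, hp.2.1 j 0, hp.2.2 j 0] at hh
  have h2 : gfun G p mV Ψ (G.tailV j (1 + 1)) = gfun G p mV Ψ (G.tailV j 1) :=
    g_tail hp hrev hΨ j 1
  rw [h2] at hh
  have : ((1 / 2 : ℝ) : ℂ) = 1 / 2 := by norm_num
  rw [this] at hh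
  have h1 : gfun G p mV Ψ (G.tailV j (0 + 1)) = gfun G p mV Ψ (G.tailV j 1) := rfl
  rw [h1] at hh
  linear_combination -2 * hh

lemma g_V0 (hp : TailTransition G p) (hrev : IsReversible G.toSymDigraph p mV)
    {α β : Fin G.r → ℂ} (hΨ : IsStationaryState G p Ψ α β) (w : G.V) :
    ∃ v ∈ G.V0, gfun G p mV Ψ w = gfun G p mV Ψ v := by
  rcases G.verts_cover w with h | ⟨j, k, rfl⟩
  · exact ⟨w, h, rfl⟩
  · exact ⟨G.tailV j 0, G.tailV_root j,
      by rw [g_tail hp hrev hΨ j k, g_root hp hrev hΨ j]⟩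

lemma harm_const {S : SymDigraph} {p : S.A → ℝ} (hp : IsTransition S p)
    (h : S.V → ℝ) (hharm : ∀ u, h u = ∑ a ∈ outF S u, p a * h (S.t a))
    (hfin : (Set.range h).Finite) (u v : S.V) : h u = h v := by
  have hne : (Set.range h).Nonempty := ⟨h u, u, rfl⟩
  obtain ⟨M, hMmem, hM⟩ :
      ∃ M ∈ Set.range h, ∀ x ∈ Set.range h, x ≤ M := by
    obtain ⟨M, hM1, hM2⟩ :=
      (hfin.toFinset.exists_max_image id (by rwa [← Set.Finite.toFinset_nonempty hfin] at hne))
    exact ⟨M, hfin.mem_toFinset.mp hM1,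
      fun x hx => hM2 x (hfin.mem_toFinset.mpr hx)⟩
  obtain ⟨u0, hu0⟩ := hMmem
  have hcl : ∀ w, h w = M → ∀ a, S.o a = w → h (S.t a) = M := by
    intro w hw a ha
    have hsum : ∑ b ∈ outF S w, p b * (M - h (S.t b)) = 0 := by
      have e1 : ∑ b ∈ outF S w, p b * (M - h (S.t b))
          = M * (∑ b ∈ outF S w, p b) - ∑ b ∈ outF S w, p b * h (S.t b) := by
        rw [Finset.mul_sum, ← Finset.sum_sub_distrib]
        exact Finset.sum_congr rfl fun b _ => by ring
      rw [e1, sum_p_out hp w, ← hharm w, hw]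
      ring
    have hnn : ∀ b ∈ outF S w, 0 ≤ p b * (M - h (S.t b)) := fun b _ =>
      mul_nonneg (hp.1 b).1.le (sub_nonneg.2 (hM _ ⟨_, rfl⟩))
    have hz := (Finset.sum_eq_zero_iff_of_nonneg hnn).1 hsum a (mem_outF.2 ha)
    rcases mul_eq_zero.1 hz with h' | h'
    · exact absurd h' (hp.1 a).1.ne'
    · linarith
  have hre : ∀ w, Relation.ReflTransGen
      (fun x y => ∃ a, S.o a = x ∧ S.t a = y) u0 w → h w = M := by
    intro w hw
    induction hw with
    | refl => exact hu0
    | tail _ step ih =>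
        obtain ⟨a, ha1, ha2⟩ := step
        rw [← ha2]
        exact hcl _ ih a ha1
  rw [hre u (S.connected u0 u), hre v (S.connected u0 v)]

lemma g_const (hp : TailTransition G p) (hrev : IsReversible G.toSymDigraph p mV)
    {α β : Fin G.r → ℂ} (hΨ : IsStationaryState G p Ψ α β) (u v : G.V) :
    gfun G p mV Ψ u = gfun G p mV Ψ v := by
  have hharm := g_harm hp.1 hrev hΨ.1
  have hfinpart : ∀ h : G.V → ℝ, (∀ w, ∃ v ∈ G.V0, h w = h v) →
      (Set.range h).Finite := by
    intro h hcov
    apply Set.Finite.subset (G.V0_fin.image h)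
    rintro x ⟨w, rfl⟩
    obtain ⟨v0, hv0, he⟩ := hcov w
    exact ⟨v0, hv0, he.symm⟩
  have hrere : ∀ w, (gfun G p mV Ψ w).re
      = ∑ a ∈ outF G.toSymDigraph w, p a * (gfun G p mV Ψ (G.t a)).re := by
    intro w
    rw [hharm w, Complex.re_sum]
    exact Finset.sum_congr rfl fun a _ => by
      simp [Complex.mul_re]
  have himim : ∀ w, (gfun G p mV Ψ w).im
      = ∑ a ∈ outF G.toSymDigraph w, p a * (gfun G p mV Ψ (G.t a)).im := by
    intro w
    rw [hharm w, Complex.im_sum]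
    exact Finset.sum_congr rfl fun a _ => by
      simp [Complex.mul_im]
  apply Complex.ext
  · exact harm_const hp.1 _ hrere
      (hfinpart _ fun w => by
        obtain ⟨v0, hv0, he⟩ := g_V0 hp hrev hΨ w
        exact ⟨v0, hv0, by rw [he]⟩) u v
  · exact harm_const hp.1 _ himim
      (hfinpart _ fun w => by
        obtain ⟨v0, hv0, he⟩ := g_V0 hp hrev hΨ w
        exact ⟨v0, hv0, by rw [he]⟩) u v

lemma global_balance (hp : TailTransition G p)
    (hrev : IsReversible G.toSymDigraph p mV)
    {α β : Fin G.r → ℂ} (hΨ : IsStationaryState G p Ψ α β) :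
    ∑ j : Fin G.r, (Real.sqrt (mE G p mV (G.tailA j 0)) : ℂ) * α j
      = ∑ j : Fin G.r, (Real.sqrt (mE G p mV (G.tailA j 0)) : ℂ) * β j := by
  classical
  set f : G.A → ℂ := fun a => (Real.sqrt (mE G p mV a) : ℂ) * Ψ a with hf
  set V0F : Finset G.V := G.V0_fin.toFinset with hV0F
  set TF : Finset G.A := V0F.biUnion (fun u => inF G.toSymDigraph u) with hTF
  set OF : Finset G.A := V0F.biUnion (fun u => outF G.toSymDigraph u) with hOF
  have hmemT : ∀ a : G.A, a ∈ TF ↔ G.t a ∈ G.V0 := by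
    intro a
    simp only [hTF, Finset.mem_biUnion, mem_inF, hV0F, Set.Finite.mem_toFinset]
    constructor
    · rintro ⟨u, hu, rfl⟩; exact hu
    · intro h; exact ⟨G.t a, h, rfl⟩
  have hmemO : ∀ a : G.A, a ∈ OF ↔ G.o a ∈ G.V0 := by
    intro a
    simp only [hOF, Finset.mem_biUnion, mem_outF, hV0F, Set.Finite.mem_toFinset]
    constructor
    · rintro ⟨u, hu, rfl⟩; exact hu
    · intro h; exact ⟨G.o a, h, rfl⟩
  have hd1 : (↑V0F : Set G.V).PairwiseDisjoint (fun u => inF G.toSymDigraph u) := by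
    intro x _ y _ hxy
    refine Finset.disjoint_left.2 fun a ha hb => hxy ?_
    rw [← mem_inF.1 ha, mem_inF.1 hb]
  have hd2 : (↑V0F : Set G.V).PairwiseDisjoint (fun u => outF G.toSymDigraph u) := by
    intro x _ y _ hxy
    refine Finset.disjoint_left.2 fun a ha hb => hxy ?_
    rw [← mem_outF.1 ha, mem_outF.1 hb]
  have hTO : ∑ a ∈ TF, f a = ∑ a ∈ OF, f a := by
    rw [hTF, hOF, Finset.sum_biUnion hd1, Finset.sum_biUnion hd2]
    exact Finset.sum_congr rfl fun u _ =>
      (flux_in hp.1 hrev u).trans (flux_out hp.1 hrev hΨ.1 u).symm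
  have hsplit : ∑ a ∈ TF \ OF, f a = ∑ a ∈ OF \ TF, f a := by
    have h1 := Finset.sum_inter_add_sum_sdiff TF OF f
    have h2 := Finset.sum_inter_add_sum_sdiff OF TF f
    rw [Finset.inter_comm] at h2
    linear_combination h1 - h2 + hTO
  have hTdiff : TF \ OF = Finset.image (fun j : Fin G.r => G.tailA j 0) Finset.univ := by
    ext a
    simp only [Finset.mem_sdiff, hmemT, hmemO, Finset.mem_image, Finset.mem_univ,
      true_and]
    constructor
    · rintro ⟨ht, ho⟩
      rcases G.arcs_cover a with h0 | ⟨j, k, rfl | rfl⟩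
      · exact absurd (G.A0_ends a h0).1 ho
      · rw [G.tailA_t] at ht
        cases k with
        | zero => exact ⟨j, rfl⟩
        | succ n => exact absurd ht (G.tailV_notin j n)
      · rw [G.t_bar, G.tailA_o] at ht
        exact absurd ht (G.tailV_notin j k)
    · rintro ⟨j, rfl⟩
      rw [G.tailA_t, G.tailA_o]
      exact ⟨G.tailV_root j, G.tailV_notin j 0⟩
  have hOdiff : OF \ TF = Finset.image (fun j : Fin G.r => G.bar (G.tailA j 0)) Finset.univ := by
    ext a
    simp only [Finset.mem_sdiff, hmemT, hmemO, Finset.mem_image, Finset.mem_univ,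
      true_and]
    constructor
    · rintro ⟨ho, ht⟩
      rcases G.arcs_cover a with h0 | ⟨j, k, rfl | rfl⟩
      · exact absurd (G.A0_ends a h0).2 ht
      · rw [G.tailA_o] at ho
        exact absurd ho (G.tailV_notin j k)
      · rw [G.o_bar, G.tailA_t] at ho
        cases k with
        | zero => exact ⟨j, rfl⟩
        | succ n => exact absurd ho (G.tailV_notin j n)
    · rintro ⟨j, rfl⟩
      rw [G.o_bar, G.t_bar, G.tailA_t, G.tailA_o]
      exact ⟨G.tailV_root j, G.tailV_notin j 0⟩
  have hinj1 : ∀ x ∈ (Finset.univ : Finset (Fin G.r)), ∀ y ∈ Finset.univ,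
      G.tailA x 0 = G.tailA y 0 → x = y := by
    intro x _ y _ h
    have h2 := congrArg G.o h
    rw [G.tailA_o, G.tailA_o] at h2
    exact (G.tailV_inj _ _ _ _ h2).1
  have hinj2 : ∀ x ∈ (Finset.univ : Finset (Fin G.r)), ∀ y ∈ Finset.univ,
      G.bar (G.tailA x 0) = G.bar (G.tailA y 0) → x = y := by
    intro x hx y hy h
    exact hinj1 x hx y hy (G.bar_inv.injective h)
  rw [hTdiff, hOdiff, Finset.sum_image hinj1, Finset.sum_image hinj2] at hsplit
  calc ∑ j : Fin G.r, (Real.sqrt (mE G p mV (G.tailA j 0)) : ℂ) * α j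
      = ∑ j : Fin G.r, f (G.tailA j 0) := by
        refine Finset.sum_congr rfl fun j _ => ?_
        simp only [hf]
        rw [hΨ.2.1 j 0]
    _ = ∑ j : Fin G.r, f (G.bar (G.tailA j 0)) := hsplit
    _ = ∑ j : Fin G.r, (Real.sqrt (mE G p mV (G.tailA j 0)) : ℂ) * β j := by
        refine Finset.sum_congr rfl fun j _ => ?_
        simp only [hf]
        rw [mE_bar hrev, hΨ.2.2 j 0]

lemma pair_tail (hp : TailTransition G p) (hrev : IsReversible G.toSymDigraph p mV)
    {α β : Fin G.r → ℂ} (hΨ : IsStationaryState G p Ψ α β) (C : ℂ)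
    (hC : ∀ u, rhoV G.toSymDigraph p Ψ u = C * (Real.sqrt (mV u) : ℂ))
    (j : Fin G.r) :
    α j + β j = 2 * C * (Real.sqrt (mE G p mV (G.tailA j 0)) : ℂ) := by
  have h := pair_eq hΨ.1 (G.tailA j 0)
  rw [hΨ.2.1 j 0, hΨ.2.2 j 0, hC] at h
  rw [h]
  have hs : Real.sqrt (mE G p mV (G.tailA j 0))
      = Real.sqrt (p (G.tailA j 0)) * Real.sqrt (mV (G.o (G.tailA j 0))) :=
    sqrt_mE hp.1 _
  rw [hs, Complex.ofReal_mul]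
  ring

end KirchhoffMain


/-- Kirchhoff's current law: the current `j` satisfies
`Σ_{t(a)=u} j(a) = Σ_{o(a)=u} j(a) = 0` at every vertex and
`j(a) + j(ā) = 0` on every arc. -/
theorem kirchhoff_current_law (G : TailedGraph) (p : G.A → ℝ)
    (hp : TailTransition G p) (mV : G.V → ℝ)
    (hrev : IsReversible G.toSymDigraph p mV)
    (Ψ : G.A → ℂ) (α β : Fin G.r → ℂ) (hΨ : IsStationaryState G p Ψ α β) :
    (∀ u : G.V,
      (∑ᶠ a ∈ {a : G.A | G.t a = u}, current G p mV α Ψ a) = 0 ∧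
      (∑ᶠ a ∈ {a : G.A | G.o a = u}, current G p mV α Ψ a) = 0) ∧
    ∀ a : G.A, current G p mV α Ψ a + current G p mV α Ψ (G.bar a) = 0 := by
  classical
  set v₀ : G.V := G.tailV ⟨0, G.r_pos⟩ 0 with hv₀
  set C : ℂ := gfun G p mV Ψ v₀ with hCdef
  have hC : ∀ u, rhoV G.toSymDigraph p Ψ u = C * (Real.sqrt (mV u) : ℂ) := by
    intro u
    rw [rhoV_eq_g hrev u, g_const hp hrev hΨ u v₀, ← hCdef]
    ring
  have hmδpos : 0 < mDelta G p mV := by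
    refine Finset.sum_pos (fun j _ => mE_pos hp.1 hrev _) ?_
    exact ⟨⟨0, G.r_pos⟩, Finset.mem_univ _⟩
  have hsqδ : (Real.sqrt (mDelta G p mV) : ℂ) * (Real.sqrt (mDelta G p mV) : ℂ)
      = ((mDelta G p mV : ℝ) : ℂ) := by
    rw [← Complex.ofReal_mul, Real.mul_self_sqrt hmδpos.le]
  have hsqδne : ((Real.sqrt (mDelta G p mV) : ℝ) : ℂ) ≠ 0 := by
    simp only [ne_eq, Complex.ofReal_eq_zero]
    exact (Real.sqrt_pos.mpr hmδpos).ne'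
  have hpairsum : ∀ j : Fin G.r,
      (Real.sqrt (mEdge G.toSymDigraph p mV (G.tailA j 0)) : ℂ) * α j
        + (Real.sqrt (mEdge G.toSymDigraph p mV (G.tailA j 0)) : ℂ) * β j
      = 2 * C * ((mEdge G.toSymDigraph p mV (G.tailA j 0) : ℝ) : ℂ) := by
    intro j
    have h : α j + β j
        = 2 * C * (Real.sqrt (mEdge G.toSymDigraph p mV (G.tailA j 0)) : ℂ) :=
      pair_tail hp hrev hΨ C hC j
    have hs : (Real.sqrt (mEdge G.toSymDigraph p mV (G.tailA j 0)) : ℂ)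
          * (Real.sqrt (mEdge G.toSymDigraph p mV (G.tailA j 0)) : ℂ)
        = ((mEdge G.toSymDigraph p mV (G.tailA j 0) : ℝ) : ℂ) := by
      rw [← Complex.ofReal_mul, Real.mul_self_sqrt (mEdge_pos hp.1 hrev _).le]
    linear_combination
      (Real.sqrt (mEdge G.toSymDigraph p mV (G.tailA j 0)) : ℂ) * h + 2 * C * hs
  have hsumα : ∑ j : Fin G.r,
      (Real.sqrt (mEdge G.toSymDigraph p mV (G.tailA j 0)) : ℂ) * α j
        = C * ((mDelta G p mV : ℝ) : ℂ) := by
    have hgb : ∑ j : Fin G.r,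
        (Real.sqrt (mEdge G.toSymDigraph p mV (G.tailA j 0)) : ℂ) * α j
          = ∑ j : Fin G.r,
              (Real.sqrt (mEdge G.toSymDigraph p mV (G.tailA j 0)) : ℂ) * β j :=
      global_balance hp hrev hΨ
    have h2 : ∑ j : Fin G.r,
        ((Real.sqrt (mEdge G.toSymDigraph p mV (G.tailA j 0)) : ℂ) * α j
          + (Real.sqrt (mEdge G.toSymDigraph p mV (G.tailA j 0)) : ℂ) * β j)
        = ∑ j : Fin G.r, 2 * C * ((mEdge G.toSymDigraph p mV (G.tailA j 0) : ℝ) : ℂ) :=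
      Finset.sum_congr rfl fun j _ => hpairsum j
    rw [Finset.sum_add_distrib, ← hgb] at h2
    have h3 : ∑ j : Fin G.r, 2 * C * ((mEdge G.toSymDigraph p mV (G.tailA j 0) : ℝ) : ℂ)
        = 2 * C * ((mDelta G p mV : ℝ) : ℂ) := by
      rw [← Finset.mul_sum]
      congr 1
      rw [mDelta]
      push_cast
      rfl
    rw [h3] at h2
    linear_combination h2 / 2
  have hbdry : bdryInner G p mV α = C * (Real.sqrt (mDelta G p mV) : ℂ) := by
    have he : ∀ j : Fin G.r,
        (Real.sqrt (mEdge G.toSymDigraph p mV (G.tailA j 0) / mDelta G p mV) : ℂ) * α j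
          = ((Real.sqrt (mEdge G.toSymDigraph p mV (G.tailA j 0)) : ℂ) * α j)
              / (Real.sqrt (mDelta G p mV) : ℂ) := by
      intro j
      rw [Real.sqrt_div (mEdge_pos hp.1 hrev _).le, Complex.ofReal_div]
      ring
    rw [bdryInner, Finset.sum_congr rfl fun j _ => he j, ← Finset.sum_div, hsumα,
      ← hsqδ, mul_div_assoc, mul_div_cancel_right₀ _ hsqδne]
  have hcur : ∀ a, current G p mV α Ψ a
      = (Real.sqrt (mEdge G.toSymDigraph p mV a) : ℂ) * Ψ a
        - ((mEdge G.toSymDigraph p mV a : ℝ) : ℂ) * C := by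
    intro a
    rw [current, hbdry]
    congr 1
    field_simp
  have hsqmV : ∀ u, (Real.sqrt (mV u) : ℂ) * (Real.sqrt (mV u) : ℂ)
      = ((mV u : ℝ) : ℂ) := by
    intro u
    rw [← Complex.ofReal_mul, Real.mul_self_sqrt (hrev.1 u).le]
  constructor
  · intro u
    constructor
    · rw [finsum_in]
      have e1 : ∑ a ∈ inF G.toSymDigraph u, current G p mV α Ψ a
          = (∑ a ∈ inF G.toSymDigraph u,
                (Real.sqrt (mEdge G.toSymDigraph p mV a) : ℂ) * Ψ a)
            - (∑ a ∈ inF G.toSymDigraph u, ((mEdge G.toSymDigraph p mV a : ℝ) : ℂ)) * C := by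
        rw [Finset.sum_congr rfl (fun a _ => hcur a), Finset.sum_sub_distrib,
          Finset.sum_mul]
      have e2 : ∑ a ∈ inF G.toSymDigraph u,
          (Real.sqrt (mEdge G.toSymDigraph p mV a) : ℂ) * Ψ a
            = (Real.sqrt (mV u) : ℂ) * rhoV G.toSymDigraph p Ψ u :=
        flux_in hp.1 hrev u
      have e3 : ∑ a ∈ inF G.toSymDigraph u, ((mEdge G.toSymDigraph p mV a : ℝ) : ℂ)
          = ((mV u : ℝ) : ℂ) := by
        have := mass_in (mV := mV) hp.1 hrev u
        push_cast [← this]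
        rfl
      rw [e1, e2, e3, hC u]
      linear_combination C * hsqmV u
    · rw [finsum_out]
      have e1 : ∑ a ∈ outF G.toSymDigraph u, current G p mV α Ψ a
          = (∑ a ∈ outF G.toSymDigraph u,
                (Real.sqrt (mEdge G.toSymDigraph p mV a) : ℂ) * Ψ a)
            - (∑ a ∈ outF G.toSymDigraph u, ((mEdge G.toSymDigraph p mV a : ℝ) : ℂ)) * C := by
        rw [Finset.sum_congr rfl (fun a _ => hcur a), Finset.sum_sub_distrib,
          Finset.sum_mul]
      have e2 : ∑ a ∈ outF G.toSymDigraph u,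
          (Real.sqrt (mEdge G.toSymDigraph p mV a) : ℂ) * Ψ a
            = (Real.sqrt (mV u) : ℂ) * rhoV G.toSymDigraph p Ψ u :=
        flux_out hp.1 hrev hΨ.1 u
      have e3 : ∑ a ∈ outF G.toSymDigraph u, ((mEdge G.toSymDigraph p mV a : ℝ) : ℂ)
          = ((mV u : ℝ) : ℂ) := by
        have := mass_out (mV := mV) hp.1 u
        push_cast [← this]
        rfl
      rw [e1, e2, e3, hC u]
      linear_combination C * hsqmV u
  · intro a
    rw [hcur a, hcur (G.bar a)]
    have hbar : mEdge G.toSymDigraph p mV (G.bar a) = mEdge G.toSymDigraph p mV a :=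
      mE_bar hrev a
    rw [hbar]
    have hpair := pair_eq hΨ.1 a
    rw [hC (G.o a)] at hpair
    have hh : (Real.sqrt (p a) : ℂ) * (Real.sqrt (mV (G.o a)) : ℂ)
        = (Real.sqrt (mEdge G.toSymDigraph p mV a) : ℂ) := by
      rw [← Complex.ofReal_mul, ← sqrt_mEdge (mV := mV) hp.1 a]
    have hs : (Real.sqrt (mEdge G.toSymDigraph p mV a) : ℂ)
          * (Real.sqrt (mEdge G.toSymDigraph p mV a) : ℂ)
        = ((mEdge G.toSymDigraph p mV a : ℝ) : ℂ) := by
      rw [← Complex.ofReal_mul, Real.mul_self_sqrt (mEdge_pos hp.1 hrev _).le]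
    linear_combination (Real.sqrt (mEdge G.toSymDigraph p mV a) : ℂ) * hpair
      + 2 * C * (Real.sqrt (mEdge G.toSymDigraph p mV a) : ℂ) * hh + 2 * C * hs
end
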